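/- arXiv:2203.07238 — 6 statements merged into one kernel-verified Lean document; each statement's English description precedes it below -/
import Mathlib

section
/- Singleton bound: assume n_i ≤ m_i for all i and m_1 ≥ m_2 ≥ … ≥ m_ℓ. Let 𝒞 ⊆ Π be a code with at least two elements and let d be either d_H^C(𝒞) or d_MC(𝒞). Let δ and j be the unique integers with d−1 = Σ_{i=1}^{j−1} n_i + δ and 0 ≤ δ ≤ n_j − 1. Then |𝒞| ≤ q^{Σ_{i=j}^ℓ m_i n_i − m_j δ}. -/
open Finset

/-- The space `∏_{i=1}^ℓ 𝔽_q^{m_i × n_i}` of `ℓ`-tuples of matrices over `F`. -/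
abbrev MCSpace (F : Type*) {ℓ : ℕ} (m n : Fin ℓ → ℕ) : Type _ :=
  (i : Fin ℓ) → Matrix (Fin (m i)) (Fin (n i)) F

section Defs

variable {F : Type*} [Field F] [Fintype F] {ℓ : ℕ} {m n : Fin ℓ → ℕ}

/-- `(X, Y)` is a multi-cover of the tuple of matrices `C`: every nonzero entry of `C i`
lies in a row indexed by `X i` or a column indexed by `Y i`. -/
def IsMultiCover (X : (i : Fin ℓ) → Finset (Fin (m i))) (Y : (i : Fin ℓ) → Finset (Fin (n i)))
    (C : MCSpace F m n) : Prop :=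
  ∀ i a b, C i a b ≠ 0 → a ∈ X i ∨ b ∈ Y i

/-- The size `Σ_i (|X_i| + |Y_i|)` of a multi-cover. -/
def mcSize {ℓ : ℕ} {m n : Fin ℓ → ℕ} (X : (i : Fin ℓ) → Finset (Fin (m i)))
    (Y : (i : Fin ℓ) → Finset (Fin (n i))) : ℕ :=
  ∑ i, ((X i).card + (Y i).card)

/-- The multi-cover weight: the minimum size of a multi-cover of `C`. -/
noncomputable def wtMC (C : MCSpace F m n) : ℕ :=
  sInf {r | ∃ X Y, IsMultiCover X Y C ∧ mcSize X Y = r}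

/-- The minimum multi-cover distance of a code. -/
noncomputable def dMC (𝒞 : Set (MCSpace F m n)) : ℕ :=
  sInf {r | ∃ C ∈ 𝒞, ∃ D ∈ 𝒞, C ≠ D ∧ wtMC (C - D) = r}

/-- The column Hamming weight: the number of nonzero columns among the matrices `C i`. -/
noncomputable def wtHC (C : MCSpace F m n) : ℕ :=
  ∑ i, Set.ncard {b : Fin (n i) | ∃ a, C i a b ≠ 0}

/-- The minimum column Hamming distance of a code. -/
noncomputable def dHC (𝒞 : Set (MCSpace F m n)) : ℕ :=
  sInf {r | ∃ C ∈ 𝒞, ∃ D ∈ 𝒞, C ≠ D ∧ wtHC (C - D) = r}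

/-- The projection `π_X` removing, in each block `i`, the rows indexed by `X i` and the
columns indexed by `Y i` (the remaining rows and columns are re-indexed in order). -/
noncomputable def projMC (X : (i : Fin ℓ) → Finset (Fin (m i)))
    (Y : (i : Fin ℓ) → Finset (Fin (n i))) (C : MCSpace F m n) :
    MCSpace F (fun i => m i - (X i).card) (fun i => n i - (Y i).card) :=
  fun i a b =>
    C i ((X i)ᶜ.orderIsoOfFin (by simp [Finset.card_compl]) a)
        ((Y i)ᶜ.orderIsoOfFin (by simp [Finset.card_compl]) b)

/-- The projection `π_X` as a linear map. -/
noncomputable def projMCLin (X : (i : Fin ℓ) → Finset (Fin (m i)))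
    (Y : (i : Fin ℓ) → Finset (Fin (n i))) :
    MCSpace F m n →ₗ[F] MCSpace F (fun i => m i - (X i).card) (fun i => n i - (Y i).card) where
  toFun := projMC X Y
  map_add' _ _ := rfl
  map_smul' _ _ := rfl

/-- The punctured code `𝒞_X = π_X(𝒞)`. -/
noncomputable def punctureMC (𝒞 : Submodule F (MCSpace F m n))
    (X : (i : Fin ℓ) → Finset (Fin (m i))) (Y : (i : Fin ℓ) → Finset (Fin (n i))) :
    Submodule F (MCSpace F (fun i => m i - (X i).card) (fun i => n i - (Y i).card)) :=
  Submodule.map (projMCLin X Y) 𝒞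

/-- The subspace of tuples vanishing on all entries covered by `(X, Y)`. -/
def zeroOnMC (X : (i : Fin ℓ) → Finset (Fin (m i))) (Y : (i : Fin ℓ) → Finset (Fin (n i))) :
    Submodule F (MCSpace F m n) where
  carrier := {C | ∀ i a b, (a ∈ X i ∨ b ∈ Y i) → C i a b = 0}
  zero_mem' := by intro i a b _; rfl
  add_mem' := by
    intro C D hC hD i a b hab
    show C i a b + D i a b = 0
    rw [hC i a b hab, hD i a b hab, add_zero]
  smul_mem' := by
    intro c C hC i a b hab
    show c * C i a b = 0
    rw [hC i a b hab, mul_zero]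

/-- The shortened code `𝒞^X`. -/
noncomputable def shortenMC (𝒞 : Submodule F (MCSpace F m n))
    (X : (i : Fin ℓ) → Finset (Fin (m i))) (Y : (i : Fin ℓ) → Finset (Fin (n i))) :
    Submodule F (MCSpace F (fun i => m i - (X i).card) (fun i => n i - (Y i).card)) :=
  Submodule.map (projMCLin X Y) (𝒞 ⊓ zeroOnMC X Y)

/-- The standard (trace / entrywise) inner product on `MCSpace F m n`. -/
def innerMC (C D : MCSpace F m n) : F := ∑ i, ∑ a, ∑ b, C i a b * D i a b

/-- The dual code with respect to the entrywise inner product. -/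
def dualMC (𝒞 : Submodule F (MCSpace F m n)) : Submodule F (MCSpace F m n) where
  carrier := {D | ∀ C ∈ 𝒞, innerMC C D = 0}
  zero_mem' := by intro C _; simp [innerMC]
  add_mem' := by
    intro D E hD hE C hC
    have h1 := hD C hC
    have h2 := hE C hC
    simp only [innerMC] at h1 h2 ⊢
    simp only [Pi.add_apply, Matrix.add_apply, mul_add, Finset.sum_add_distrib, h1, h2, add_zero]
  smul_mem' := by
    intro c D hD C hC
    have h1 := hD C hC
    simp only [innerMC] at h1 ⊢
    simp only [Pi.smul_apply, Matrix.smul_apply, smul_eq_mul, mul_left_comm, ← Finset.mul_sum,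
      h1, mul_zero]

/-- `𝒞` is a maximum multi-cover distance (MMCD) code: it attains the Singleton bound,
where `j` and `δ` are the (unique) integers with `d_MC(𝒞) - 1 = Σ_{i<j} n_i + δ`,
`0 ≤ δ ≤ n_j - 1`. -/
noncomputable def IsMMCD (𝒞 : Set (MCSpace F m n)) : Prop :=
  ∃ (j : Fin ℓ) (δ : ℕ), δ ≤ n j - 1 ∧
    dMC 𝒞 - 1 = (∑ i ∈ Finset.Iio j, n i) + δ ∧
    𝒞.ncard = (Fintype.card F) ^ ((∑ i ∈ Finset.Ici j, m i * n i) - m j * δ)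

/-- The sum-rank weight. -/
noncomputable def wtSR (C : MCSpace F m n) : ℕ := ∑ i, (C i).rank

/-- The minimum sum-rank distance of a code. -/
noncomputable def dSR (𝒞 : Set (MCSpace F m n)) : ℕ :=
  sInf {r | ∃ C ∈ 𝒞, ∃ D ∈ 𝒞, C ≠ D ∧ wtSR (C - D) = r}

/-- The cover weight of a single matrix. -/
noncomputable def coverWt {m n : ℕ} (C : Matrix (Fin m) (Fin n) F) : ℕ :=
  sInf {r | ∃ (X : Finset (Fin m)) (Y : Finset (Fin n)),
    (∀ a b, C a b ≠ 0 → a ∈ X ∨ b ∈ Y) ∧ X.card + Y.card = r}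

end Defs

/-- `S_r^{m,n}`: the number of `m × n` matrices over `F` of cover weight exactly `r`. -/
noncomputable def Scount (F : Type*) [Field F] [Fintype F] (m n r : ℕ) : ℕ :=
  Set.ncard {C : Matrix (Fin m) (Fin n) F | coverWt C = r}

section Aux

variable {F : Type*} [Field F] [Fintype F] {ℓ : ℕ} {m n : Fin ℓ → ℕ}

lemma exists_entry_ne_zero {C : MCSpace F m n} (hC : C ≠ 0) :
    ∃ i a b, C i a b ≠ 0 := by
  by_contra h
  push_neg at h
  apply hC
  funext i
  ext a b
  exact h i a b

lemma wtMC_pos (C : MCSpace F m n) (hC : C ≠ 0) : 1 ≤ wtMC C := by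
  rw [Nat.one_le_iff_ne_zero]
  intro h0
  rw [wtMC, Nat.sInf_eq_zero] at h0
  rcases h0 with h0 | h0
  · obtain ⟨X, Y, hcov, hsize⟩ := h0
    obtain ⟨i, a, b, hne⟩ := exists_entry_ne_zero hC
    have hz : (X i).card + (Y i).card = 0 := by
      have := (Finset.sum_eq_zero_iff.mp hsize) i (Finset.mem_univ i)
      simpa using this
    have hXe : X i = ∅ := Finset.card_eq_zero.mp (by omega)
    have hYe : Y i = ∅ := Finset.card_eq_zero.mp (by omega)
    rcases hcov i a b hne with ha | hb
    · simp [hXe] at ha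
    · simp [hYe] at hb
  · have hmem : mcSize (fun i => (Finset.univ : Finset (Fin (m i))))
        (fun i => (∅ : Finset (Fin (n i)))) ∈
        {r | ∃ X Y, IsMultiCover X Y C ∧ mcSize X Y = r} :=
      ⟨_, _, fun i a b _ => Or.inl (Finset.mem_univ a), rfl⟩
    rw [h0] at hmem
    exact hmem

lemma wtHC_pos (C : MCSpace F m n) (hC : C ≠ 0) : 1 ≤ wtHC C := by
  obtain ⟨i, a, b, hne⟩ := exists_entry_ne_zero hC
  have h1 : 1 ≤ Set.ncard {b : Fin (n i) | ∃ a, C i a b ≠ 0} :=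
    (Set.ncard_pos (Set.toFinite _)).mpr ⟨b, a, hne⟩
  calc 1 ≤ Set.ncard {b : Fin (n i) | ∃ a, C i a b ≠ 0} := h1
    _ ≤ wtHC C := Finset.single_le_sum (f := fun i => Set.ncard {b : Fin (n i) | ∃ a, C i a b ≠ 0})
        (fun _ _ => Nat.zero_le _) (Finset.mem_univ i)

lemma card_matrix_fin (F : Type*) [Fintype F] [DecidableEq F] (a b : ℕ) :
    Fintype.card (Matrix (Fin a) (Fin b) F) = Fintype.card F ^ (a * b) := by
  rw [Fintype.card_congr (Matrix.of (m := Fin a) (n := Fin b) (α := F)).symm]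
  simp [← pow_mul, mul_comm]

end Aux

/-- the Singleton bound for the column Hamming metric and the multi-cover
metric. -/
theorem singleton_bound_MC {F : Type*} [Field F] [Fintype F] {ℓ : ℕ} {m n : Fin ℓ → ℕ}
    (hm : ∀ i, 0 < m i) (hn : ∀ i, 0 < n i)
    (hnm : ∀ i, n i ≤ m i) (hmono : ∀ i j : Fin ℓ, i ≤ j → m j ≤ m i)
    (𝒞 : Set (MCSpace F m n)) (h𝒞 : 1 < 𝒞.ncard)
    (d : ℕ) (hd : d = dHC 𝒞 ∨ d = dMC 𝒞)
    (j : Fin ℓ) (δ : ℕ) (hδ : δ ≤ n j - 1)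
    (hdecomp : d - 1 = (∑ i ∈ Finset.Iio j, n i) + δ) :
    𝒞.ncard ≤ (Fintype.card F) ^ ((∑ i ∈ Finset.Ici j, m i * n i) - m j * δ) := by
  classical
  have hδn : δ ≤ n j := le_trans hδ (Nat.sub_le _ _)
  set X : (i : Fin ℓ) → Finset (Fin (m i)) := fun i => ∅ with hX
  set Y : (i : Fin ℓ) → Finset (Fin (n i)) :=
    fun i => Finset.univ.filter (fun b => i < j ∨ (i = j ∧ (b : ℕ) < δ)) with hY
  -- cardinality of the column sets
  have hYcard : ∀ i, (Y i).card = if i < j then n i else if i = j then δ else 0 := by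
    intro i
    by_cases h1 : i < j
    · simp [hY, h1, Finset.filter_true_of_mem]
    · by_cases h2 : i = j
      · rw [if_neg h1, if_pos h2]
        have he : Y i = Finset.attachFin (Finset.range δ)
            (fun t ht => lt_of_lt_of_le (Finset.mem_range.mp ht) (h2.symm ▸ hδn)) := by
          ext b; simp [hY, h1, h2]
        rw [he, Finset.card_attachFin, Finset.card_range]
      · simp [hY, h1, h2]
  have e1 : Finset.univ.filter (fun i : Fin ℓ => i < j) = Finset.Iio j := by ext i; simp
  have e2 : Finset.univ.filter (fun i : Fin ℓ => ¬ i < j) = Finset.Ici j := by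
    ext i; simp [not_lt]
  have e5 : Finset.Ici j \ {j} = Finset.Ioi j := by
    ext i; simp [lt_iff_le_and_ne, eq_comm, and_comm]
  have hYsum : ∑ i, (Y i).card = (∑ i ∈ Finset.Iio j, n i) + δ := by
    rw [← Finset.sum_filter_add_sum_filter_not Finset.univ (fun i => i < j)
      (fun i => (Y i).card), e1, e2]
    have e3 : ∑ i ∈ Finset.Iio j, (Y i).card = ∑ i ∈ Finset.Iio j, n i :=
      Finset.sum_congr rfl (fun i hi => by rw [hYcard]; simp [Finset.mem_Iio.mp hi])
    have e4 : ∑ i ∈ Finset.Ici j, (Y i).card = δ := by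
      rw [Finset.sum_eq_sum_sdiff_singleton_add (Finset.mem_Ici.mpr le_rfl)
        (fun i => (Y i).card), e5]
      have hz : ∀ i ∈ Finset.Ioi j, (Y i).card = 0 := by
        intro i hi
        have hji : j < i := Finset.mem_Ioi.mp hi
        rw [hYcard]
        simp [not_lt_of_gt hji, ne_of_gt hji]
      rw [Finset.sum_eq_zero hz, hYcard]
      simp
    rw [e3, e4]
  -- key: if two codewords have the same projection, any entry outside Y vanishes
  have hzero : ∀ C D : MCSpace F m n, projMC X Y C = projMC X Y D →
      ∀ i a b, b ∉ Y i → (C - D) i a b = 0 := by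
    intro C D hproj i a b hb
    have hca : ((X i)ᶜ).card = m i - (X i).card := by simp [Finset.card_compl]
    have hcb : ((Y i)ᶜ).card = n i - (Y i).card := by simp [Finset.card_compl]
    have hamem : a ∈ (X i)ᶜ := by simp [hX]
    have hbmem : b ∈ (Y i)ᶜ := Finset.mem_compl.mpr hb
    set a' := ((X i)ᶜ.orderIsoOfFin hca).symm ⟨a, hamem⟩ with ha'
    set b' := ((Y i)ᶜ.orderIsoOfFin hcb).symm ⟨b, hbmem⟩ with hb'
    have h : C i (((X i)ᶜ.orderIsoOfFin hca) a') (((Y i)ᶜ.orderIsoOfFin hcb) b')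
        = D i (((X i)ᶜ.orderIsoOfFin hca) a') (((Y i)ᶜ.orderIsoOfFin hcb) b') :=
      congrFun (congrFun (congrFun hproj i) a') b'
    rw [ha', hb'] at h
    simp only [OrderIso.apply_symm_apply] at h
    simpa [sub_eq_zero] using h
  -- injectivity of the projection on the code
  have key : ∀ C ∈ 𝒞, ∀ D ∈ 𝒞, projMC X Y C = projMC X Y D → C = D := by
    intro C hC D hD hproj
    by_contra hne
    have hz := hzero C D hproj
    have hcover : IsMultiCover X Y (C - D) := by
      intro i a b hne'
      by_contra hcon
      push_neg at hcon
      exact hne' (hz i a b hcon.2)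
    have hsize : mcSize X Y = d - 1 := by
      simp only [mcSize, hX, Finset.card_empty, zero_add]
      rw [hYsum, hdecomp]
    obtain ⟨C₀, D₀, hC₀, hD₀, hne₀⟩ := (Set.one_lt_ncard_iff 𝒞.toFinite).mp h𝒞
    rcases hd with hd | hd
    · -- column Hamming distance
      have hle : d ≤ wtHC (C - D) := by
        rw [hd]; exact Nat.sInf_le ⟨C, hC, D, hD, hne, rfl⟩
      have hub : wtHC (C - D) ≤ d - 1 := by
        have hsum : wtHC (C - D) ≤ ∑ i, (Y i).card := by
          refine Finset.sum_le_sum (fun i _ => ?_)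
          have hsub : {b : Fin (n i) | ∃ a, (C - D) i a b ≠ 0} ⊆ (↑(Y i) : Set _) := by
            intro b hb
            rcases hb with ⟨a, ha⟩
            by_contra hbY
            exact ha (hz i a b (by simpa using hbY))
          calc Set.ncard {b : Fin (n i) | ∃ a, (C - D) i a b ≠ 0}
              ≤ (↑(Y i) : Set _).ncard := Set.ncard_le_ncard hsub (Y i).finite_toSet
            _ = (Y i).card := Set.ncard_coe_finset _
        rw [hYsum, ← hdecomp] at hsum
        exact hsum
      have hdpos : 1 ≤ d := by
        have hmem : d ∈ {r | ∃ C ∈ 𝒞, ∃ D ∈ 𝒞, C ≠ D ∧ wtHC (C - D) = r} := by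
          rw [hd]; exact Nat.sInf_mem ⟨_, C₀, hC₀, D₀, hD₀, hne₀, rfl⟩
        obtain ⟨C₁, _, D₁, _, hne₁, hw⟩ := hmem
        exact hw ▸ wtHC_pos _ (sub_ne_zero.mpr hne₁)
      omega
    · -- multi-cover distance
      have hle : d ≤ wtMC (C - D) := by
        rw [hd]; exact Nat.sInf_le ⟨C, hC, D, hD, hne, rfl⟩
      have hub : wtMC (C - D) ≤ d - 1 := Nat.sInf_le ⟨X, Y, hcover, hsize⟩
      have hdpos : 1 ≤ d := by
        have hmem : d ∈ {r | ∃ C ∈ 𝒞, ∃ D ∈ 𝒞, C ≠ D ∧ wtMC (C - D) = r} := by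
          rw [hd]; exact Nat.sInf_mem ⟨_, C₀, hC₀, D₀, hD₀, hne₀, rfl⟩
        obtain ⟨C₁, _, D₁, _, hne₁, hw⟩ := hmem
        exact hw ▸ wtMC_pos _ (sub_ne_zero.mpr hne₁)
      omega
  -- counting
  have hinj : Set.InjOn (projMC X Y) 𝒞 := fun C hC D hD h => key C hC D hD h
  have h1 : 𝒞.ncard = ((projMC X Y) '' 𝒞).ncard := (Set.ncard_image_of_injOn hinj).symm
  have h2 : ((projMC X Y) '' 𝒞).ncard ≤
      Nat.card (MCSpace F (fun i => m i - (X i).card) (fun i => n i - (Y i).card)) := by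
    rw [← Set.ncard_univ]
    exact Set.ncard_le_ncard (Set.subset_univ _) Set.finite_univ
  have h3 : Nat.card (MCSpace F (fun i => m i - (X i).card) (fun i => n i - (Y i).card)) =
      (Fintype.card F) ^ (∑ i, (m i - (X i).card) * (n i - (Y i).card)) := by
    rw [Nat.card_eq_fintype_card, Fintype.card_pi]
    rw [Finset.prod_congr rfl (fun i _ => card_matrix_fin F (m i - (X i).card)
      (n i - (Y i).card))]
    rw [Finset.prod_pow_eq_pow_sum]
  have hexp : ∑ i, (m i - (X i).card) * (n i - (Y i).card) =
      (∑ i ∈ Finset.Ici j, m i * n i) - m j * δ := by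
    have hXc : ∀ i, (X i).card = 0 := fun i => by simp [hX]
    simp only [hXc, Nat.sub_zero]
    rw [← Finset.sum_filter_add_sum_filter_not Finset.univ (fun i => i < j)
      (fun i => m i * (n i - (Y i).card)), e1, e2]
    have hz1 : ∑ i ∈ Finset.Iio j, m i * (n i - (Y i).card) = 0 := by
      refine Finset.sum_eq_zero (fun i hi => ?_)
      rw [hYcard]
      simp [Finset.mem_Iio.mp hi]
    rw [hz1, zero_add]
    rw [Finset.sum_eq_sum_sdiff_singleton_add (Finset.mem_Ici.mpr le_rfl)
      (fun i => m i * (n i - (Y i).card)), e5]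
    rw [Finset.sum_eq_sum_sdiff_singleton_add (Finset.mem_Ici.mpr (le_refl j))
      (fun i => m i * n i), e5]
    have hz2 : ∑ i ∈ Finset.Ioi j, m i * (n i - (Y i).card) = ∑ i ∈ Finset.Ioi j, m i * n i := by
      refine Finset.sum_congr rfl (fun i hi => ?_)
      have hji : j < i := Finset.mem_Ioi.mp hi
      rw [hYcard]
      simp [not_lt_of_gt hji, ne_of_gt hji]
    have hYj : (Y j).card = δ := by rw [hYcard]; simp
    rw [hz2, hYj]
    have hmul : m j * n j = m j * (n j - δ) + m j * δ := by
      rw [← Nat.mul_add, Nat.sub_add_cancel hδn]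
    omega
  rw [h1]
  calc ((projMC X Y) '' 𝒞).ncard ≤ _ := h2
    _ = _ := h3
    _ = _ := by rw [hexp]
end

section
/- Projective sphere-packing bound: let 𝒞 ⊆ Π with |𝒞| ≥ 2, d = d_MC(𝒞), and 3 ≤ d ≤ n_1 + n_2 + ⋯ + n_ℓ. Let j and δ be integers with 1 ≤ j ≤ ℓ − 1, 1 ≤ δ ≤ n_{j+1} − 1, and d − 3 = Σ_{i=1}^j n_i + δ. Define n′_{j+1} = n_{j+1} − δ and n′_i = n_i for all i ≠ j+1. Then |𝒞| ≤ ⌊ q^{Σ_{i=j+1}^ℓ m_i n′_i} / ( 1 + Σ_{i=j+1}^ℓ ( n′_i(q^{m_i} − 1) + m_i(q^{n′_i} − 1) − m_i n′_i (q − 1) ) ) ⌋. -/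
open Finset

section AuxMC

variable {F : Type*} [Field F] [Fintype F] {ℓ : ℕ} {m n : Fin ℓ → ℕ}

lemma isMultiCover_univ (C : MCSpace F m n) :
    IsMultiCover (fun _ => Finset.univ) (fun _ => (∅ : Finset _)) C :=
  fun _ a _ _ => Or.inl (Finset.mem_univ a)

lemma wtMC_le_of_cover {C : MCSpace F m n} {X Y} (h : IsMultiCover X Y C) :
    wtMC C ≤ mcSize X Y := Nat.sInf_le ⟨X, Y, h, rfl⟩

lemma exists_min_cover (C : MCSpace F m n) :
    ∃ X Y, IsMultiCover X Y C ∧ mcSize X Y = wtMC C := by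
  have hne : {r | ∃ X Y, IsMultiCover X Y C ∧ mcSize X Y = r}.Nonempty :=
    ⟨mcSize (fun _ => Finset.univ) (fun _ => (∅ : Finset _)),
      _, _, isMultiCover_univ C, rfl⟩
  exact Nat.sInf_mem hne

lemma wtMC_sub_le (A B : MCSpace F m n) : wtMC (A - B) ≤ wtMC A + wtMC B := by
  obtain ⟨X1, Y1, h1, e1⟩ := exists_min_cover A
  obtain ⟨X2, Y2, h2, e2⟩ := exists_min_cover B
  have hc : IsMultiCover (fun i => X1 i ∪ X2 i) (fun i => Y1 i ∪ Y2 i) (A - B) := by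
    intro i a b hne
    have h : A i a b ≠ 0 ∨ B i a b ≠ 0 := by
      by_contra h; push_neg at h
      apply hne
      show A i a b - B i a b = 0
      rw [h.1, h.2, sub_zero]
    rcases h with h | h
    · rcases h1 i a b h with h' | h'
      · exact Or.inl (Finset.mem_union_left _ h')
      · exact Or.inr (Finset.mem_union_left _ h')
    · rcases h2 i a b h with h' | h'
      · exact Or.inl (Finset.mem_union_right _ h')
      · exact Or.inr (Finset.mem_union_right _ h')
  calc wtMC (A - B) ≤ mcSize (fun i => X1 i ∪ X2 i) (fun i => Y1 i ∪ Y2 i) :=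
        wtMC_le_of_cover hc
    _ ≤ mcSize X1 Y1 + mcSize X2 Y2 := by
        unfold mcSize
        rw [← Finset.sum_add_distrib]
        refine Finset.sum_le_sum fun i _ => ?_
        dsimp only
        have hx := Finset.card_union_le (X1 i) (X2 i)
        have hy := Finset.card_union_le (Y1 i) (Y2 i)
        omega
    _ = wtMC A + wtMC B := by rw [e1, e2]

lemma dMC_le_wtMC {𝒞 : Set (MCSpace F m n)} {C D : MCSpace F m n}
    (hC : C ∈ 𝒞) (hD : D ∈ 𝒞) (hne : C ≠ D) :
    dMC 𝒞 ≤ wtMC (C - D) := Nat.sInf_le ⟨C, hC, D, hD, hne, rfl⟩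

/-- The projection dropping, in each block, the columns with index `≥ n'' i`. -/
def projCols (n'' : Fin ℓ → ℕ) (hle : ∀ i, n'' i ≤ n i) (C : MCSpace F m n) :
    MCSpace F m n'' :=
  fun i a b => C i a (Fin.castLE (hle i) b)

lemma projCols_sub (n'' : Fin ℓ → ℕ) (hle : ∀ i, n'' i ≤ n i) (C D : MCSpace F m n) :
    projCols n'' hle (C - D) = projCols n'' hle C - projCols n'' hle D := rfl

lemma wtMC_le_projCols (n'' : Fin ℓ → ℕ) (hle : ∀ i, n'' i ≤ n i) (C : MCSpace F m n) :
    wtMC C ≤ wtMC (projCols n'' hle C) + ∑ i, (n i - n'' i) := by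
  classical
  obtain ⟨X, Y, hXY, hsz⟩ := exists_min_cover (projCols n'' hle C)
  set Y' : (i : Fin ℓ) → Finset (Fin (n i)) := fun i =>
    (Y i).image (Fin.castLE (hle i)) ∪
      (Finset.univ.image (fun t : Fin (n i - n'' i) =>
        (⟨n'' i + t.val, by have := t.isLt; omega⟩ : Fin (n i)))) with hY'
  have hc : IsMultiCover X Y' C := by
    intro i a b hb
    by_cases h : b.val < n'' i
    · have hb' : projCols n'' hle C i a ⟨b.val, h⟩ ≠ 0 := by
        show C i a (Fin.castLE (hle i) ⟨b.val, h⟩) ≠ 0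
        have : Fin.castLE (hle i) ⟨b.val, h⟩ = b := Fin.ext rfl
        rw [this]; exact hb
      rcases hXY i a ⟨b.val, h⟩ hb' with h' | h'
      · exact Or.inl h'
      · refine Or.inr (Finset.mem_union_left _ ?_)
        refine Finset.mem_image.mpr ⟨⟨b.val, h⟩, h', Fin.ext rfl⟩
    · push_neg at h
      refine Or.inr (Finset.mem_union_right _ ?_)
      have hlt : b.val - n'' i < n i - n'' i := by have := b.isLt; omega
      refine Finset.mem_image.mpr ⟨⟨b.val - n'' i, hlt⟩, Finset.mem_univ _, ?_⟩
      exact Fin.ext (by simp; omega)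
  calc wtMC C ≤ mcSize X Y' := wtMC_le_of_cover hc
    _ ≤ ∑ i, ((X i).card + (Y i).card + (n i - n'' i)) := by
        unfold mcSize
        refine Finset.sum_le_sum fun i _ => ?_
        have h1 := Finset.card_union_le ((Y i).image (Fin.castLE (hle i)))
          (Finset.univ.image (fun t : Fin (n i - n'' i) =>
            (⟨n'' i + t.val, by have := t.isLt; omega⟩ : Fin (n i))))
        have h2 := Finset.card_image_le (s := Y i) (f := Fin.castLE (hle i))
        have h3 := Finset.card_image_le (s := (Finset.univ : Finset (Fin (n i - n'' i))))
          (f := fun t : Fin (n i - n'' i) =>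
            (⟨n'' i + t.val, by have := t.isLt; omega⟩ : Fin (n i)))
        simp only [Finset.card_univ, Fintype.card_fin] at h3
        simp only [hY']
        omega
    _ = mcSize X Y + ∑ i, (n i - n'' i) := by
        unfold mcSize; rw [← Finset.sum_add_distrib]
    _ = wtMC (projCols n'' hle C) + ∑ i, (n i - n'' i) := by rw [hsz]

end AuxMC

open scoped Classical in
/-- Nonzero matrices supported in a single row. -/
noncomputable def RowF (F : Type*) [Field F] [Fintype F] (m n : ℕ) :
    Finset (Matrix (Fin m) (Fin n) F) :=
  Finset.univ.filter (fun A => A ≠ 0 ∧ ∃ a0, ∀ a b, A a b ≠ 0 → a = a0)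

open scoped Classical in
/-- Nonzero matrices supported in a single column. -/
noncomputable def ColF (F : Type*) [Field F] [Fintype F] (m n : ℕ) :
    Finset (Matrix (Fin m) (Fin n) F) :=
  Finset.univ.filter (fun A => A ≠ 0 ∧ ∃ b0, ∀ a b, A a b ≠ 0 → b = b0)

section Counting

variable (F : Type*) [Field F] [Fintype F]

lemma card_ColF_ge (m n : ℕ) :
    n * (Fintype.card F ^ m - 1) ≤ (ColF F m n).card := by
  classical
  set g : Fin n → (Fin m → F) → Matrix (Fin m) (Fin n) F :=
    fun b v => Matrix.of (fun a b' => if b' = b then v a else 0) with hg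
  have hginj : ∀ b, Function.Injective (g b) := by
    intro b v w h
    funext a
    have := congrFun (congrFun h a) b
    simpa [hg] using this
  have hsub : (Finset.univ.biUnion fun b : Fin n =>
      (({0}ᶜ : Finset (Fin m → F)).image (g b))) ⊆ ColF F m n := by
    intro A hA
    simp only [Finset.mem_biUnion, Finset.mem_image, Finset.mem_compl,
      Finset.mem_singleton] at hA
    obtain ⟨b, _, v, hv, rfl⟩ := hA
    obtain ⟨a, ha⟩ : ∃ a, v a ≠ 0 := by
      by_contra h; push_neg at h; exact hv (funext h)
    refine Finset.mem_filter.mpr ⟨Finset.mem_univ _, ?_, b, ?_⟩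
    · intro h0
      have : g b v a b = 0 := by rw [h0]; rfl
      simp [hg] at this
      exact ha this
    · intro a' b' h
      by_contra hne
      simp [hg, hne] at h
  have hdisj : ((Finset.univ : Finset (Fin n)) : Set (Fin n)).PairwiseDisjoint
      (fun b => (({0}ᶜ : Finset (Fin m → F)).image (g b))) := by
    intro b _ b' _ hbb'
    refine Finset.disjoint_left.mpr ?_
    intro A hA hA'
    simp only [Finset.mem_image, Finset.mem_compl, Finset.mem_singleton] at hA hA'
    obtain ⟨v, hv, rfl⟩ := hA
    obtain ⟨w, hw, hweq⟩ := hA'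
    obtain ⟨a, ha⟩ : ∃ a, v a ≠ 0 := by
      by_contra h; push_neg at h; exact hv (funext h)
    have h1 := congrFun (congrFun hweq a) b
    simp [hg, hbb'] at h1
    first
    | exact ha h1.symm
    | exact ha h1
  have hcard : (Finset.univ.biUnion fun b : Fin n =>
      (({0}ᶜ : Finset (Fin m → F)).image (g b))).card
      = n * (Fintype.card F ^ m - 1) := by
    rw [Finset.card_biUnion (fun b _ b' _ h => hdisj (Finset.mem_coe.mpr (Finset.mem_univ b))
      (Finset.mem_coe.mpr (Finset.mem_univ b')) h)]
    have : ∀ b : Fin n, (({0}ᶜ : Finset (Fin m → F)).image (g b)).card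
        = Fintype.card F ^ m - 1 := by
      intro b
      rw [Finset.card_image_of_injective _ (hginj b), Finset.card_compl,
        Finset.card_singleton]
      simp [Fintype.card_fun]
    simp only [this, Finset.sum_const, Finset.card_univ, Fintype.card_fin, smul_eq_mul]
  calc n * (Fintype.card F ^ m - 1)
      = (Finset.univ.biUnion fun b : Fin n =>
        (({0}ᶜ : Finset (Fin m → F)).image (g b))).card := hcard.symm
    _ ≤ (ColF F m n).card := Finset.card_le_card hsub

lemma card_RowF_ge (m n : ℕ) :
    m * (Fintype.card F ^ n - 1) ≤ (RowF F m n).card := by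
  classical
  set g : Fin m → (Fin n → F) → Matrix (Fin m) (Fin n) F :=
    fun a v => Matrix.of (fun a' b => if a' = a then v b else 0) with hg
  have hginj : ∀ a, Function.Injective (g a) := by
    intro a v w h
    funext b
    have := congrFun (congrFun h a) b
    simpa [hg] using this
  have hsub : (Finset.univ.biUnion fun a : Fin m =>
      (({0}ᶜ : Finset (Fin n → F)).image (g a))) ⊆ RowF F m n := by
    intro A hA
    simp only [Finset.mem_biUnion, Finset.mem_image, Finset.mem_compl,
      Finset.mem_singleton] at hA
    obtain ⟨a, _, v, hv, rfl⟩ := hA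
    obtain ⟨b, hb⟩ : ∃ b, v b ≠ 0 := by
      by_contra h; push_neg at h; exact hv (funext h)
    refine Finset.mem_filter.mpr ⟨Finset.mem_univ _, ?_, a, ?_⟩
    · intro h0
      have : g a v a b = 0 := by rw [h0]; rfl
      simp [hg] at this
      exact hb this
    · intro a' b' h
      by_contra hne
      simp [hg, hne] at h
  have hdisj : ((Finset.univ : Finset (Fin m)) : Set (Fin m)).PairwiseDisjoint
      (fun a => (({0}ᶜ : Finset (Fin n → F)).image (g a))) := by
    intro a _ a' _ haa'
    refine Finset.disjoint_left.mpr ?_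
    intro A hA hA'
    simp only [Finset.mem_image, Finset.mem_compl, Finset.mem_singleton] at hA hA'
    obtain ⟨v, hv, rfl⟩ := hA
    obtain ⟨w, hw, hweq⟩ := hA'
    obtain ⟨b, hb⟩ : ∃ b, v b ≠ 0 := by
      by_contra h; push_neg at h; exact hv (funext h)
    have h1 := congrFun (congrFun hweq a) b
    simp [hg, haa'] at h1
    first
    | exact hb h1.symm
    | exact hb h1
  have hcard : (Finset.univ.biUnion fun a : Fin m =>
      (({0}ᶜ : Finset (Fin n → F)).image (g a))).card
      = m * (Fintype.card F ^ n - 1) := by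
    rw [Finset.card_biUnion (fun a _ a' _ h => hdisj (Finset.mem_coe.mpr (Finset.mem_univ a))
      (Finset.mem_coe.mpr (Finset.mem_univ a')) h)]
    have : ∀ a : Fin m, (({0}ᶜ : Finset (Fin n → F)).image (g a)).card
        = Fintype.card F ^ n - 1 := by
      intro a
      rw [Finset.card_image_of_injective _ (hginj a), Finset.card_compl,
        Finset.card_singleton]
      simp [Fintype.card_fun]
    simp only [this, Finset.sum_const, Finset.card_univ, Fintype.card_fin, smul_eq_mul]
  calc m * (Fintype.card F ^ n - 1)
      = (Finset.univ.biUnion fun a : Fin m =>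
        (({0}ᶜ : Finset (Fin n → F)).image (g a))).card := hcard.symm
    _ ≤ (RowF F m n).card := Finset.card_le_card hsub

open scoped Classical in
lemma card_RowF_inter_ColF_le (m n : ℕ) :
    ((RowF F m n) ∩ (ColF F m n)).card ≤ m * n * (Fintype.card F - 1) := by
  classical
  set h : Fin m × Fin n × F → Matrix (Fin m) (Fin n) F :=
    fun p => Matrix.of (fun a b => if a = p.1 ∧ b = p.2.1 then p.2.2 else 0) with hh
  have hsub : (RowF F m n) ∩ (ColF F m n) ⊆
      ((Finset.univ ×ˢ Finset.univ ×ˢ ({0}ᶜ : Finset F)).image h) := by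
    intro A hA
    rw [Finset.mem_inter] at hA
    obtain ⟨hR, hC⟩ := hA
    rw [RowF, Finset.mem_filter] at hR
    rw [ColF, Finset.mem_filter] at hC
    obtain ⟨-, hA0, a0, ha0⟩ := hR
    obtain ⟨-, -, b0, hb0⟩ := hC
    obtain ⟨a, b, hab⟩ : ∃ a b, A a b ≠ 0 := by
      by_contra hcon; push_neg at hcon
      exact hA0 (by funext a b; exact hcon a b)
    refine Finset.mem_image.mpr ⟨(a, b, A a b), ?_, ?_⟩
    · simp [Finset.mem_product, hab]
    · funext a' b'
      show (if a' = a ∧ b' = b then A a b else 0) = A a' b'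
      by_cases hcase : a' = a ∧ b' = b
      · rw [if_pos hcase, hcase.1, hcase.2]
      · rw [if_neg hcase]
        by_contra hne
        have hne' : A a' b' ≠ 0 := fun hz => hne hz.symm
        have e1 : a' = a0 := ha0 a' b' hne'
        have e2 : a = a0 := ha0 a b hab
        have e3 : b' = b0 := hb0 a' b' hne'
        have e4 : b = b0 := hb0 a b hab
        exact hcase ⟨e1.trans e2.symm, e3.trans e4.symm⟩
  calc ((RowF F m n) ∩ (ColF F m n)).card
      ≤ ((Finset.univ ×ˢ Finset.univ ×ˢ ({0}ᶜ : Finset F)).image h).card :=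
        Finset.card_le_card hsub
    _ ≤ (Finset.univ ×ˢ Finset.univ ×ˢ ({0}ᶜ : Finset F)).card := Finset.card_image_le
    _ = m * n * (Fintype.card F - 1) := by
        rw [Finset.card_product, Finset.card_product, Finset.card_compl,
          Finset.card_singleton]
        simp [mul_assoc]

open scoped Classical in
lemma card_RowF_union_ColF_ge (m n : ℕ) :
    n * (Fintype.card F ^ m - 1) + m * (Fintype.card F ^ n - 1)
      - m * n * (Fintype.card F - 1) ≤ ((RowF F m n) ∪ (ColF F m n)).card := by
  classical
  have h1 := card_ColF_ge F m n
  have h2 := card_RowF_ge F m n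
  have h3 := card_RowF_inter_ColF_le F m n
  have h4 := Finset.card_union_add_card_inter (RowF F m n) (ColF F m n)
  omega

end Counting

section BallMC

variable {F : Type*} [Field F] [Fintype F] {ℓ : ℕ} {m n : Fin ℓ → ℕ}

lemma wtMC_zero_le : wtMC (0 : MCSpace F m n) ≤ 1 := by
  have hc : IsMultiCover (fun _ => (∅ : Finset _)) (fun _ => (∅ : Finset _))
      (0 : MCSpace F m n) := by
    intro i a b hb
    exact absurd rfl hb
  refine (wtMC_le_of_cover hc).trans ?_
  simp [mcSize]

open scoped Classical in
lemma wtMC_update_le {i : Fin ℓ} {A : Matrix (Fin (m i)) (Fin (n i)) F}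
    (hA : A ∈ (RowF F (m i) (n i)) ∪ (ColF F (m i) (n i))) :
    wtMC (Function.update (0 : MCSpace F m n) i A) ≤ 1 := by
  classical
  rw [Finset.mem_union] at hA
  rcases hA with hA | hA
  · rw [RowF, Finset.mem_filter] at hA
    obtain ⟨-, -, a0, ha0⟩ := hA
    have hc : IsMultiCover (Function.update (fun j => (∅ : Finset (Fin (m j)))) i {a0})
        (fun _ => (∅ : Finset _)) (Function.update (0 : MCSpace F m n) i A) := by
      intro j a b hb
      by_cases hj : j = i
      · subst hj
        rw [Function.update_self] at hb ⊢
        exact Or.inl (Finset.mem_singleton.mpr (ha0 a b hb))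
      · rw [Function.update_of_ne hj] at hb
        exact absurd rfl hb
    refine (wtMC_le_of_cover hc).trans ?_
    unfold mcSize
    rw [Finset.sum_eq_single_of_mem i (Finset.mem_univ i)]
    · simp
    · intro j _ hj
      rw [Function.update_of_ne hj]
      simp
  · rw [ColF, Finset.mem_filter] at hA
    obtain ⟨-, -, b0, hb0⟩ := hA
    have hc : IsMultiCover (fun _ => (∅ : Finset _))
        (Function.update (fun j => (∅ : Finset (Fin (n j)))) i {b0})
        (Function.update (0 : MCSpace F m n) i A) := by
      intro j a b hb
      by_cases hj : j = i
      · subst hj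
        rw [Function.update_self] at hb ⊢
        exact Or.inr (Finset.mem_singleton.mpr (hb0 a b hb))
      · rw [Function.update_of_ne hj] at hb
        exact absurd rfl hb
    refine (wtMC_le_of_cover hc).trans ?_
    unfold mcSize
    rw [Finset.sum_eq_single_of_mem i (Finset.mem_univ i)]
    · simp
    · intro j _ hj
      rw [Function.update_of_ne hj]
      simp

lemma update_zero_injective (i : Fin ℓ) :
    Function.Injective (fun A : Matrix (Fin (m i)) (Fin (n i)) F =>
      Function.update (0 : MCSpace F m n) i A) := by
  intro A A' h
  have h1 := congrFun h i
  simpa using h1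

open scoped Classical in
lemma mem_rowcol_ne_zero {m n : ℕ} {A : Matrix (Fin m) (Fin n) F}
    (h : A ∈ (RowF F m n) ∪ (ColF F m n)) : A ≠ 0 := by
  rw [Finset.mem_union] at h
  rcases h with h | h
  · exact ((Finset.mem_filter.mp h).2).1
  · exact ((Finset.mem_filter.mp h).2).1

end BallMC

/-- the projective sphere-packing bound for the multi-cover metric.
Here `k` is the (0-based) index of the `(j+1)`-th block, so `1 ≤ k` and the sums
`Σ_{i=1}^j` and `Σ_{i=j+1}^ℓ` of the paper become sums over `Iio k` and `Ici k`. -/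
theorem projective_sphere_packing_MC {F : Type*} [Field F] [Fintype F] {ℓ : ℕ}
    {m n : Fin ℓ → ℕ}
    (hm : ∀ i, 0 < m i) (hn : ∀ i, 0 < n i)
    (hnm : ∀ i, n i ≤ m i) (hmono : ∀ i j : Fin ℓ, i ≤ j → m j ≤ m i)
    (𝒞 : Set (MCSpace F m n)) (h𝒞 : 2 ≤ 𝒞.ncard)
    (d : ℕ) (hd : d = dMC 𝒞) (hd3 : 3 ≤ d) (hdN : d ≤ ∑ i, n i)
    (k : Fin ℓ) (hk : 1 ≤ k.val)
    (δ : ℕ) (hδ1 : 1 ≤ δ) (hδ2 : δ ≤ n k - 1)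
    (hdecomp : d - 3 = (∑ i ∈ Finset.Iio k, n i) + δ)
    (n' : Fin ℓ → ℕ) (hn' : n' = fun i => if i = k then n k - δ else n i) :
    𝒞.ncard ≤ (Fintype.card F) ^ (∑ i ∈ Finset.Ici k, m i * n' i) /
      (1 + ∑ i ∈ Finset.Ici k, (n' i * ((Fintype.card F) ^ m i - 1)
        + m i * ((Fintype.card F) ^ n' i - 1) - m i * n' i * (Fintype.card F - 1))) := by
  classical
  have hδnk : δ ≤ n k := le_trans hδ2 (Nat.sub_le _ _)
  have hn'k : n' k = n k - δ := by rw [hn']; simp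
  have hn'ne : ∀ i, i ≠ k → n' i = n i := by intro i h; rw [hn']; simp [h]
  set n'' : Fin ℓ → ℕ := fun i => if k ≤ i then n' i else 0 with hn''
  have hn''eq : ∀ i ∈ Finset.Ici k, n'' i = n' i := by
    intro i hi; rw [Finset.mem_Ici] at hi
    simp only [hn'']; rw [if_pos hi]
  have hle : ∀ i, n'' i ≤ n i := by
    intro i
    simp only [hn'']
    by_cases h : k ≤ i
    · rw [if_pos h]
      by_cases h2 : i = k
      · subst h2; rw [hn'k]; exact Nat.sub_le _ _
      · rw [hn'ne i h2]
    · rw [if_neg h]; exact Nat.zero_le _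
  -- the total number of removed columns is `d - 3`
  have hsumdiff : ∑ i, (n i - n'' i) = d - 3 := by
    have hsplit : (Finset.univ : Finset (Fin ℓ)) = Finset.Iio k ∪ Finset.Ici k := by
      ext i
      simp only [Finset.mem_univ, Finset.mem_union, Finset.mem_Iio, Finset.mem_Ici, true_iff]
      exact lt_or_ge i k
    have hdisj : Disjoint (Finset.Iio k) (Finset.Ici k) := by
      rw [Finset.disjoint_left]
      intro i h1 h2
      rw [Finset.mem_Iio] at h1; rw [Finset.mem_Ici] at h2
      exact absurd h2 (not_le_of_gt h1)
    rw [hdecomp]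
    calc ∑ i, (n i - n'' i) = ∑ i ∈ Finset.Iio k ∪ Finset.Ici k, (n i - n'' i) := by
          rw [← hsplit]
      _ = (∑ i ∈ Finset.Iio k, (n i - n'' i)) + (∑ i ∈ Finset.Ici k, (n i - n'' i)) :=
          Finset.sum_union hdisj
      _ = (∑ i ∈ Finset.Iio k, n i) + δ := by
          congr 1
          · refine Finset.sum_congr rfl fun i hi => ?_
            rw [Finset.mem_Iio] at hi
            simp only [hn'']
            rw [if_neg (not_le_of_gt hi), Nat.sub_zero]
          · have hcongr : ∀ i ∈ Finset.Ici k, n i - n'' i = if i = k then δ else 0 := by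
              intro i hi
              rw [hn''eq i hi]
              by_cases h2 : i = k
              · subst h2; rw [if_pos rfl, hn'k]; omega
              · rw [if_neg h2, hn'ne i h2]; omega
            rw [Finset.sum_congr rfl hcongr, Finset.sum_ite_eq' (Finset.Ici k) k (fun _ => δ),
              if_pos (Finset.mem_Ici.mpr (le_refl k))]
  -- projected differences have multi-cover weight at least 3
  have key : ∀ C ∈ 𝒞, ∀ D ∈ 𝒞, C ≠ D → 3 ≤ wtMC (projCols n'' hle (C - D)) := by
    intro C hC D hD hne
    have h1 : d ≤ wtMC (C - D) := hd ▸ dMC_le_wtMC hC hD hne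
    have h2 := wtMC_le_projCols n'' hle (C - D)
    rw [hsumdiff] at h2
    omega
  set Ball : Finset (MCSpace F m n'') := Finset.univ.filter (fun e => wtMC e ≤ 1) with hBall
  have hfin : 𝒞.Finite := Set.toFinite _
  -- sphere packing
  have hpack : 𝒞.ncard * Ball.card ≤ Fintype.card (MCSpace F m n'') := by
    have hmaps : ∀ p ∈ hfin.toFinset ×ˢ Ball,
        (projCols (F := F) n'' hle p.1 + p.2) ∈ (Finset.univ : Finset (MCSpace F m n'')) :=
      fun _ _ => Finset.mem_univ _
    have hinj : Set.InjOn (fun p : MCSpace F m n × MCSpace F m n'' =>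
        projCols n'' hle p.1 + p.2) ↑(hfin.toFinset ×ˢ Ball) := by
      rintro ⟨C, e⟩ hCe ⟨D, e'⟩ hDe' heq
      obtain ⟨hC, he⟩ := Finset.mem_product.mp (Finset.mem_coe.mp hCe)
      obtain ⟨hD, he'⟩ := Finset.mem_product.mp (Finset.mem_coe.mp hDe')
      rw [Set.Finite.mem_toFinset] at hC hD
      rw [hBall, Finset.mem_filter] at he he'
      have heq' : projCols n'' hle C + e = projCols n'' hle D + e' := heq
      by_cases hCD : C = D
      · subst hCD
        have he2 : e = e' := add_left_cancel heq'
        rw [he2]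
      · exfalso
        have h3 : projCols n'' hle (C - D) = e' - e := by
          rw [projCols_sub, sub_eq_sub_iff_add_eq_add, heq', add_comm]
        have he1 : wtMC e ≤ 1 := he.2
        have he2 : wtMC e' ≤ 1 := he'.2
        have h4 : wtMC (e' - e) ≤ 2 := (wtMC_sub_le e' e).trans (by omega)
        have h5 := key C hC D hD hCD
        rw [h3] at h5
        omega
    have hcard := Finset.card_le_card_of_injOn _ hmaps hinj
    rw [Finset.card_product, Finset.card_univ] at hcard
    rwa [Set.ncard_eq_toFinset_card 𝒞 hfin]
  -- ball size lower bound
  have hball : (1 + ∑ i ∈ Finset.Ici k, (n' i * ((Fintype.card F) ^ m i - 1)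
      + m i * ((Fintype.card F) ^ n' i - 1) - m i * n' i * (Fintype.card F - 1)))
      ≤ Ball.card := by
    set T : Finset (MCSpace F m n'') :=
      insert 0 ((Finset.Ici k).biUnion fun i =>
        ((RowF F (m i) (n'' i)) ∪ (ColF F (m i) (n'' i))).image
          (fun A => Function.update (0 : MCSpace F m n'') i A)) with hT
    have hTsub : T ⊆ Ball := by
      intro e he
      rw [hT, Finset.mem_insert] at he
      rw [hBall, Finset.mem_filter]
      refine ⟨Finset.mem_univ _, ?_⟩
      rcases he with rfl | he
      · exact wtMC_zero_le
      · rw [Finset.mem_biUnion] at he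
        obtain ⟨i, _, he⟩ := he
        rw [Finset.mem_image] at he
        obtain ⟨A, hA, rfl⟩ := he
        exact wtMC_update_le hA
    have hTcard : T.card = 1 + ∑ i ∈ Finset.Ici k,
        ((RowF F (m i) (n'' i)) ∪ (ColF F (m i) (n'' i))).card := by
      rw [hT]
      rw [Finset.card_insert_of_notMem]
      · rw [Finset.card_biUnion]
        · rw [Nat.add_comm]
          congr 1
          refine Finset.sum_congr rfl fun i _ => ?_
          exact Finset.card_image_of_injective _ (update_zero_injective i)
        · intro i _ j _ hij
          simp only [Function.onFun]
          rw [Finset.disjoint_left]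
          intro x hx hx'
          rw [Finset.mem_image] at hx hx'
          obtain ⟨A, hA, rfl⟩ := hx
          obtain ⟨A', hA', heq⟩ := hx'
          apply mem_rowcol_ne_zero hA
          have h1 := congrFun heq i
          rw [Function.update_self, Function.update_of_ne hij] at h1
          exact h1.symm
      · intro h0
        rw [Finset.mem_biUnion] at h0
        obtain ⟨i, _, h0⟩ := h0
        rw [Finset.mem_image] at h0
        obtain ⟨A, hA, heq⟩ := h0
        apply mem_rowcol_ne_zero hA
        have h1 := congrFun heq i
        rw [Function.update_self] at h1
        exact h1
    calc 1 + ∑ i ∈ Finset.Ici k, (n' i * ((Fintype.card F) ^ m i - 1)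
          + m i * ((Fintype.card F) ^ n' i - 1) - m i * n' i * (Fintype.card F - 1))
        = 1 + ∑ i ∈ Finset.Ici k, (n'' i * ((Fintype.card F) ^ m i - 1)
          + m i * ((Fintype.card F) ^ n'' i - 1) - m i * n'' i * (Fintype.card F - 1)) := by
          congr 1
          refine Finset.sum_congr rfl fun i hi => ?_
          rw [hn''eq i hi]
      _ ≤ 1 + ∑ i ∈ Finset.Ici k,
          ((RowF F (m i) (n'' i)) ∪ (ColF F (m i) (n'' i))).card := by
          refine Nat.add_le_add_left (Finset.sum_le_sum fun i _ => ?_) 1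
          exact card_RowF_union_ColF_ge F (m i) (n'' i)
      _ = T.card := hTcard.symm
      _ ≤ Ball.card := Finset.card_le_card hTsub
  -- size of the ambient projected space
  have hspace : Fintype.card (MCSpace F m n'') =
      (Fintype.card F) ^ (∑ i ∈ Finset.Ici k, m i * n' i) := by
    have h1 : Fintype.card (MCSpace F m n'') = ∏ i, (Fintype.card F) ^ (m i * n'' i) := by
      rw [Fintype.card_pi]
      refine Finset.prod_congr rfl fun i _ => ?_
      rw [← Fintype.card_congr (Matrix.of (m := Fin (m i)) (n := Fin (n'' i)) (α := F))]
      rw [Fintype.card_fun]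
      simp [Fintype.card_fun, ← pow_mul, Nat.mul_comm]
    rw [h1, Finset.prod_pow_eq_pow_sum]
    congr 1
    rw [← Finset.sum_subset (Finset.subset_univ (Finset.Ici k))]
    · exact (Finset.sum_congr rfl fun i hi => by rw [hn''eq i hi]).symm
    · intro i _ hi
      rw [Finset.mem_Ici] at hi
      simp only [hn'']
      rw [if_neg hi, Nat.mul_zero]
  have hVpos : 0 < 1 + ∑ i ∈ Finset.Ici k, (n' i * ((Fintype.card F) ^ m i - 1)
      + m i * ((Fintype.card F) ^ n' i - 1) - m i * n' i * (Fintype.card F - 1)) := by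
    omega
  rw [Nat.le_div_iff_mul_le hVpos]
  calc 𝒞.ncard * (1 + ∑ i ∈ Finset.Ici k, (n' i * ((Fintype.card F) ^ m i - 1)
        + m i * ((Fintype.card F) ^ n' i - 1) - m i * n' i * (Fintype.card F - 1)))
      ≤ 𝒞.ncard * Ball.card := Nat.mul_le_mul_left _ hball
    _ ≤ Fintype.card (MCSpace F m n'') := hpack
    _ = (Fintype.card F) ^ (∑ i ∈ Finset.Ici k, m i * n' i) := hspace
end

section
/- Bound on the number of blocks of MMCD codes: assume m = m_1 = ⋯ = m_ℓ and n = n_1 = ⋯ = n_ℓ with n ≤ m. Suppose there exists an MMCD code 𝒞 ⊆ (𝔽_q^{m×n})^ℓ with d = d_MC(𝒞) ≥ 3. Let 0 ≤ δ ≤ n − 1 be the remainder of the Euclidean division of d − 3 by n. Then ℓ ≤ ⌊ ( q^{2m} − 1 − m(q^{n−δ} − 1) − (n−δ)(q^m − 1) + m(n−δ)(q−1) ) / ( m(q^n − 1) + n(q^m − 1) − mn(q−1) ) ⌋ + ⌊(d−3)/n⌋ + 1. -/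
open Finset

section AuxMMCD


section Aux
variable {F : Type*} [Field F] [Fintype F]

/-- "At most one nonzero entry" predicate for vectors. -/
def AMO {k : ℕ} (v : Fin k → F) : Prop := ∀ a b, v a ≠ 0 → v b ≠ 0 → a = b

open scoped Classical in
noncomputable def amoEquiv (k : ℕ) :
    Option (Fin k × {c : F // c ≠ 0}) ≃ {v : Fin k → F // AMO v} where
  toFun p := p.elim ⟨0, fun a b ha _ => absurd rfl ha⟩
    (fun q => ⟨fun b => if b = q.1 then q.2.1 else 0, by
      intro a b ha hb
      simp only [ne_eq, ite_eq_right_iff, not_forall] at ha hb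
      rw [ha.1, hb.1]⟩)
  invFun v := if h : v.1 = 0 then none else
    some (Classical.choose (Function.ne_iff.mp h),
      ⟨v.1 (Classical.choose (Function.ne_iff.mp h)),
        Classical.choose_spec (Function.ne_iff.mp h)⟩)
  left_inv p := by
    cases p with
    | none => simp
    | some q =>
      obtain ⟨a1, c⟩ := q
      have hne : (fun b => if b = a1 then c.1 else 0) ≠ (0 : Fin k → F) := by
        intro h
        have := congrFun h a1
        simp [c.2] at this
      simp only [Option.elim, dif_neg hne]
      have hspec := Classical.choose_spec (Function.ne_iff.mp hne)
      have h1 : Classical.choose (Function.ne_iff.mp hne) = a1 := by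
        by_contra hc
        have hspec' : (if Classical.choose (Function.ne_iff.mp hne) = a1 then (c : F) else 0) ≠ 0 := hspec
        rw [if_neg hc] at hspec'
        exact hspec' rfl
      simp only [h1, if_pos rfl, Option.some.injEq]
      exact Prod.ext rfl rfl
  right_inv v := by
    by_cases h : v.1 = 0
    · simp only [dif_pos h, Option.elim]
      exact Subtype.ext h.symm
    · simp only [dif_neg h, Option.elim]
      have hspec := Classical.choose_spec (Function.ne_iff.mp h)
      apply Subtype.ext
      funext b
      by_cases hb : b = Classical.choose (Function.ne_iff.mp h)
      · simp [hb]
      · simp only [if_neg hb]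
        by_contra hb0
        refine hb (v.2 b _ (fun hx => hb0 ?_) hspec)
        rw [hx]
end Aux

section Aux2
variable {F : Type*} [Field F] [Fintype F]

open scoped Classical in
lemma card_amo (k : ℕ) :
    Fintype.card {v : Fin k → F // AMO v} = 1 + k * (Fintype.card F - 1) := by
  rw [← Fintype.card_congr (amoEquiv (F := F) k)]
  have hc : Fintype.card {c : F // c ≠ 0} = Fintype.card F - 1 := by
    rw [Fintype.card_subtype_compl, Fintype.card_subtype_eq]
  simp [hc]
  omega

open scoped Classical in
lemma card_namo (k : ℕ) :
    Fintype.card {v : Fin k → F // ¬ AMO v}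
      = Fintype.card F ^ k - (1 + k * (Fintype.card F - 1)) := by
  rw [Fintype.card_subtype_compl, card_amo, Fintype.card_fun, Fintype.card_fin]

end Aux2

section Aux3
variable {F : Type*} [Field F] [Fintype F]

/-- Parameter type for nonzero matrices supported in a single line. -/
def BP (F : Type*) [Field F] (m k : ℕ) : Type _ :=
  (Fin m × {v : Fin k → F // ¬ AMO v}) ⊕ (Fin k × {w : Fin m → F // ¬ AMO w}) ⊕
    (Fin m × Fin k × {c : F // c ≠ 0})

variable {m k : ℕ}

def bpMat : BP F m k → Matrix (Fin m) (Fin k) F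
  | Sum.inl (a, v) => fun a' b => if a' = a then v.1 b else 0
  | Sum.inr (Sum.inl (b, w)) => fun a b' => if b' = b then w.1 a else 0
  | Sum.inr (Sum.inr (a, b, c)) => fun a' b' => if a' = a ∧ b' = b then c.1 else 0

omit [Fintype F] in
lemma namo_exists {j : ℕ} {v : Fin j → F} (h : ¬ AMO v) :
    ∃ a b, v a ≠ 0 ∧ v b ≠ 0 ∧ a ≠ b := by
  unfold AMO at h
  push_neg at h
  obtain ⟨a, b, ha, hb, hab⟩ := h
  exact ⟨a, b, ha, hb, hab⟩

omit [Fintype F] in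
lemma bpMat_ne_zero (p : BP F m k) : bpMat p ≠ 0 := by
  intro h
  match p with
  | Sum.inl (a, v) =>
    obtain ⟨x, y, hx, hy, hxy⟩ := namo_exists v.2
    have := congrFun (congrFun h a) x
    simp [bpMat] at this
    exact hx this
  | Sum.inr (Sum.inl (b, w)) =>
    obtain ⟨x, y, hx, hy, hxy⟩ := namo_exists w.2
    have := congrFun (congrFun h x) b
    simp [bpMat] at this
    exact hx this
  | Sum.inr (Sum.inr (a, b, c)) =>
    have := congrFun (congrFun h a) b
    simp [bpMat] at this
    exact c.2 this

omit [Fintype F] in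
lemma bpMat_injective : Function.Injective (bpMat (F := F) (m := m) (k := k)) := by
  intro p q h
  match p, q with
  | Sum.inl (a, v), Sum.inl (a2, v2) =>
    obtain ⟨x, y, hx, hy, hxy⟩ := namo_exists v.2
    have ha : a = a2 := by
      by_contra hc
      have h1 := congrFun (congrFun h a) x
      simp [bpMat, hc] at h1
      exact hx h1
    subst ha
    have hv : v = v2 := by
      apply Subtype.ext; funext b
      have := congrFun (congrFun h a) b
      simpa [bpMat] using this
    rw [hv]
  | Sum.inl (a, v), Sum.inr (Sum.inl (b, w)) =>
    exfalso
    obtain ⟨x, y, hx, hy, hxy⟩ := namo_exists v.2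
    have hxb : x = b := by
      by_contra hc
      have h1 := congrFun (congrFun h a) x
      simp [bpMat, hc] at h1
      exact hx h1
    have hyb : y = b := by
      by_contra hc
      have h2 := congrFun (congrFun h a) y
      simp [bpMat, hc] at h2
      exact hy h2
    exact hxy (hxb.trans hyb.symm)
  | Sum.inl (a, v), Sum.inr (Sum.inr (a2, b2, c)) =>
    exfalso
    obtain ⟨x, y, hx, hy, hxy⟩ := namo_exists v.2
    have hxb : x = b2 := by
      by_contra hc
      have h1 := congrFun (congrFun h a) x
      simp [bpMat, hc] at h1
      exact hx h1
    have hyb : y = b2 := by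
      by_contra hc
      have h2 := congrFun (congrFun h a) y
      simp [bpMat, hc] at h2
      exact hy h2
    exact hxy (hxb.trans hyb.symm)
  | Sum.inr (Sum.inl (b, w)), Sum.inl (a, v) =>
    exfalso
    obtain ⟨x, y, hx, hy, hxy⟩ := namo_exists v.2
    have hxb : x = b := by
      by_contra hc
      have h1 := congrFun (congrFun h.symm a) x
      simp [bpMat, hc] at h1
      exact hx h1
    have hyb : y = b := by
      by_contra hc
      have h2 := congrFun (congrFun h.symm a) y
      simp [bpMat, hc] at h2
      exact hy h2
    exact hxy (hxb.trans hyb.symm)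
  | Sum.inr (Sum.inl (b, w)), Sum.inr (Sum.inl (b2, w2)) =>
    obtain ⟨x, y, hx, hy, hxy⟩ := namo_exists w.2
    have hb : b = b2 := by
      by_contra hc
      have h1 := congrFun (congrFun h x) b
      simp [bpMat, hc] at h1
      exact hx h1
    subst hb
    have hw : w = w2 := by
      apply Subtype.ext; funext a
      have := congrFun (congrFun h a) b
      simpa [bpMat] using this
    rw [hw]
  | Sum.inr (Sum.inl (b, w)), Sum.inr (Sum.inr (a2, b2, c)) =>
    exfalso
    obtain ⟨x, y, hx, hy, hxy⟩ := namo_exists w.2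
    have hxb : x = a2 := by
      by_contra hc
      have h1 := congrFun (congrFun h x) b
      simp [bpMat, hc] at h1
      exact hx h1
    have hyb : y = a2 := by
      by_contra hc
      have h2 := congrFun (congrFun h y) b
      simp [bpMat, hc] at h2
      exact hy h2
    exact hxy (hxb.trans hyb.symm)
  | Sum.inr (Sum.inr (a2, b2, c)), Sum.inl (a, v) =>
    exfalso
    obtain ⟨x, y, hx, hy, hxy⟩ := namo_exists v.2
    have hxb : x = b2 := by
      by_contra hc
      have h1 := congrFun (congrFun h.symm a) x
      simp [bpMat, hc] at h1
      exact hx h1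
    have hyb : y = b2 := by
      by_contra hc
      have h2 := congrFun (congrFun h.symm a) y
      simp [bpMat, hc] at h2
      exact hy h2
    exact hxy (hxb.trans hyb.symm)
  | Sum.inr (Sum.inr (a2, b2, c)), Sum.inr (Sum.inl (b, w)) =>
    exfalso
    obtain ⟨x, y, hx, hy, hxy⟩ := namo_exists w.2
    have hxb : x = a2 := by
      by_contra hc
      have h1 := congrFun (congrFun h.symm x) b
      simp [bpMat, hc] at h1
      exact hx h1
    have hyb : y = a2 := by
      by_contra hc
      have h2 := congrFun (congrFun h.symm y) b
      simp [bpMat, hc] at h2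
      exact hy h2
    exact hxy (hxb.trans hyb.symm)
  | Sum.inr (Sum.inr (a, b, c)), Sum.inr (Sum.inr (a2, b2, c2)) =>
    have hab : a = a2 ∧ b = b2 := by
      by_contra hc
      have h1 := congrFun (congrFun h a) b
      simp [bpMat, hc] at h1
      exact c.2 h1
    obtain ⟨ha, hb⟩ := hab
    subst ha; subst hb
    have hcc : c = c2 := by
      apply Subtype.ext
      have h1 := congrFun (congrFun h a) b
      simpa [bpMat] using h1
    rw [hcc]

omit [Fintype F] in
lemma bpMat_line (p : BP F m k) :
    (∃ a, ∀ a' b, bpMat p a' b ≠ 0 → a' = a) ∨ (∃ b, ∀ a b', bpMat p a b' ≠ 0 → b' = b) := by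
  match p with
  | Sum.inl (a, v) =>
    left
    refine ⟨a, fun a' b h => ?_⟩
    by_contra hc
    simp [bpMat, hc] at h
  | Sum.inr (Sum.inl (b, w)) =>
    right
    refine ⟨b, fun a b' h => ?_⟩
    by_contra hc
    simp [bpMat, hc] at h
  | Sum.inr (Sum.inr (a, b, c)) =>
    left
    refine ⟨a, fun a' b' h => ?_⟩
    by_contra hc
    simp [bpMat, hc] at h

open scoped Classical in
noncomputable instance : Fintype (BP F m k) := by
  unfold BP; infer_instance

open scoped Classical in
lemma card_BP :
    Fintype.card (BP F m k)
      = m * (Fintype.card F ^ k - (1 + k * (Fintype.card F - 1)))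
        + k * (Fintype.card F ^ m - (1 + m * (Fintype.card F - 1)))
        + m * (k * (Fintype.card F - 1)) := by
  have hc : Fintype.card {c : F // c ≠ 0} = Fintype.card F - 1 := by
    rw [Fintype.card_subtype_compl, Fintype.card_subtype_eq]
  rw [show Fintype.card (BP F m k)
      = Fintype.card ((Fin m × {v : Fin k → F // ¬ AMO v}) ⊕ (Fin k × {w : Fin m → F // ¬ AMO w}) ⊕
        (Fin m × Fin k × {c : F // c ≠ 0})) from rfl]
  simp [Fintype.card_sum, Fintype.card_prod, card_namo, card_amo, hc, mul_assoc]
  ring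

end Aux3

lemma pow_lb (q k : ℕ) (hq : 1 ≤ q) : 1 + k * (q - 1) ≤ q ^ k := by
  induction k with
  | zero => simp
  | succ k ih =>
    have h1 : 1 ≤ q ^ k := Nat.one_le_pow _ _ hq
    calc 1 + (k + 1) * (q - 1) = (1 + k * (q - 1)) + (q - 1) := by ring
    _ ≤ q ^ k + q ^ k * (q - 1) := by
        gcongr
        calc q - 1 = 1 * (q - 1) := (one_mul _).symm
        _ ≤ q ^ k * (q - 1) := by gcongr
    _ = q ^ k * (1 + (q - 1)) := by ring
    _ = q ^ (k + 1) := by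
        have : 1 + (q - 1) = q := by omega
        rw [this, pow_succ, mul_comm]

lemma card_filter_val_lt (n δ : ℕ) (h : δ ≤ n) :
    (Finset.univ.filter (fun b : Fin n => b.val < δ)).card = δ := by
  have himg : (Finset.univ.filter (fun b : Fin n => b.val < δ)).image Fin.val
      = Finset.range δ := by
    ext x
    simp only [Finset.mem_image, Finset.mem_filter, Finset.mem_univ, true_and, Finset.mem_range]
    constructor
    · rintro ⟨b, hb, rfl⟩; exact hb
    · intro hx; exact ⟨⟨x, lt_of_lt_of_le hx h⟩, hx, rfl⟩
  rw [← Finset.card_image_of_injective _ Fin.val_injective, himg, Finset.card_range]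

end AuxMMCD

/-- bound on the number of blocks `ℓ` of an MMCD code with equal numbers of
rows and of columns. -/
theorem MMCD_length_bound {F : Type*} [Field F] [Fintype F] (ℓ m n : ℕ)
    (hℓ : 0 < ℓ) (hm : 0 < m) (hn : 0 < n) (hnm : n ≤ m)
    (𝒞 : Set (MCSpace F (fun _ : Fin ℓ => m) (fun _ : Fin ℓ => n))) (h𝒞 : 1 < 𝒞.ncard)
    (d : ℕ) (hd : d = dMC 𝒞) (hd3 : 3 ≤ d)
    (hMMCD : 𝒞.ncard = (Fintype.card F) ^ (m * (ℓ * n - d + 1)))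
    (δ : ℕ) (hδ : δ = (d - 3) % n) :
    (ℓ : ℤ) ≤
      ((Fintype.card F : ℤ) ^ (2 * m) - 1 - (m : ℤ) * ((Fintype.card F : ℤ) ^ (n - δ) - 1)
          - ((n : ℤ) - (δ : ℤ)) * ((Fintype.card F : ℤ) ^ m - 1)
          + (m : ℤ) * ((n : ℤ) - (δ : ℤ)) * ((Fintype.card F : ℤ) - 1))
        / ((m : ℤ) * ((Fintype.card F : ℤ) ^ n - 1) + (n : ℤ) * ((Fintype.card F : ℤ) ^ m - 1)
          - (m : ℤ) * (n : ℤ) * ((Fintype.card F : ℤ) - 1))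
      + (((d - 3) / n : ℕ) : ℤ) + 1 := by
  classical
  set q := Fintype.card F with hqdef
  have hq : 2 ≤ q := Fintype.one_lt_card
  obtain ⟨C0, D0, hC0, hD0, hne0⟩ : ∃ a b, a ∈ 𝒞 ∧ b ∈ 𝒞 ∧ a ≠ b := by
    obtain ⟨a, b, ha, hb, hab⟩ := (Set.one_lt_ncard_iff (Set.toFinite 𝒞)).mp h𝒞
    exact ⟨a, b, ha, hb, hab⟩
  have wt_le : ∀ E : MCSpace F (fun _ : Fin ℓ => m) (fun _ : Fin ℓ => n), wtMC E ≤ ℓ * n := by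
    intro E
    have hmem : (ℓ * n) ∈ {r | ∃ X Y, IsMultiCover X Y E ∧ mcSize X Y = r} := by
      refine ⟨fun _ => ∅, fun _ => Finset.univ, fun i a b _ => Or.inr (Finset.mem_univ b), ?_⟩
      simp [mcSize, Finset.card_univ, mul_comm]
    exact Nat.sInf_le hmem
  have hdln : d ≤ ℓ * n := by
    have h1 : d ≤ wtMC (C0 - D0) := by
      rw [hd]
      exact Nat.sInf_le ⟨C0, hC0, D0, hD0, hne0, rfl⟩
    exact le_trans h1 (wt_le _)
  -- numerology with opaque variables
  obtain ⟨j, hjeq, hjδ⟩ : ∃ j : ℕ, j = (d - 3) / n ∧ j * n + δ = d - 3 :=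
    ⟨_, rfl, by rw [hδ, mul_comm]; exact Nat.div_add_mod _ _⟩
  have hδn : δ < n := by rw [hδ]; exact Nat.mod_lt _ hn
  clear hδ
  have hjl : j < ℓ := by
    by_contra hc
    push_neg at hc
    have : ℓ * n ≤ j * n := Nat.mul_le_mul_right n hc
    omega
  obtain ⟨t, htℓ⟩ : ∃ t, ℓ = j + 1 + t := ⟨ℓ - j - 1, by omega⟩
  obtain ⟨k0, hk0⟩ : ∃ k0, n = δ + k0 := ⟨n - δ, by omega⟩
  have hk0pos : 1 ≤ k0 := by omega
  set jF : Fin ℓ := ⟨j, hjl⟩ with hjF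
  have hemb : ∀ i' : Fin t, j + 1 + i'.val < ℓ := by
    intro i'; have := i'.isLt; omega
  set emb : Fin t → Fin ℓ := fun i' => ⟨j + 1 + i'.val, hemb i'⟩ with hembdef
  have hembC : ∀ b : Fin k0, δ + b.val < n := by
    intro b; have := b.isLt; omega
  set embC : Fin k0 → Fin n := fun b => ⟨δ + b.val, hembC b⟩ with hembCdef
  -- the pattern map
  set patV : Option (BP F m k0 ⊕ (Fin t × BP F m n)) →
      (Fin m → Fin k0 → F) × (Fin t → Fin m → Fin n → F) :=
    fun p => p.elim 0 (Sum.elim (fun bp => (bpMat bp, 0))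
      (fun z => (0, fun i' => if i' = z.1 then bpMat z.2 else 0))) with hpatV
  -- line covers for patterns
  have lineCov : ∀ p, ∃ (X : Fin ℓ → Finset (Fin m)) (Y : Fin ℓ → Finset (Fin n)),
      (∑ i, ((X i).card + (Y i).card)) ≤ 1 ∧
      (∀ a (b : Fin k0), (patV p).1 a b ≠ 0 → a ∈ X jF ∨ embC b ∈ Y jF) ∧
      (∀ (i' : Fin t) a b, (patV p).2 i' a b ≠ 0 → a ∈ X (emb i') ∨ b ∈ Y (emb i')) := by
    intro p
    match p with
    | none =>
      refine ⟨fun _ => ∅, fun _ => ∅, by simp, ?_, ?_⟩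
      · intro a b h; simp [hpatV] at h
      · intro i' a b h; simp [hpatV] at h
    | some (Sum.inl bp) =>
      rcases bpMat_line bp with ⟨a0, ha0⟩ | ⟨b0, hb0⟩
      · refine ⟨fun i => if i = jF then {a0} else ∅, fun _ => ∅, ?_, ?_, ?_⟩
        · have : ∀ i : Fin ℓ, ((if i = jF then ({a0} : Finset (Fin m)) else ∅).card
              + (∅ : Finset (Fin n)).card) = if i = jF then 1 else 0 := by
            intro i; split_ifs <;> simp
          rw [Finset.sum_congr rfl (fun i _ => this i), Finset.sum_ite_eq' Finset.univ jF
            (fun _ => 1)]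
          simp
        · intro a b h
          left
          have := ha0 a b (by simpa [hpatV] using h)
          simp [this]
        · intro i' a b h
          simp [hpatV] at h
      · refine ⟨fun _ => ∅, fun i => if i = jF then {embC b0} else ∅, ?_, ?_, ?_⟩
        · have : ∀ i : Fin ℓ, ((∅ : Finset (Fin m)).card
              + (if i = jF then ({embC b0} : Finset (Fin n)) else ∅).card) = if i = jF then 1 else 0 := by
            intro i; split_ifs <;> simp
          rw [Finset.sum_congr rfl (fun i _ => this i), Finset.sum_ite_eq' Finset.univ jF
            (fun _ => 1)]
          simp
        · intro a b h
          right
          have := hb0 a b (by simpa [hpatV] using h)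
          simp [this]
        · intro i' a b h
          simp [hpatV] at h
    | some (Sum.inr (i0, bp)) =>
      rcases bpMat_line bp with ⟨a0, ha0⟩ | ⟨b0, hb0⟩
      · refine ⟨fun i => if i = emb i0 then {a0} else ∅, fun _ => ∅, ?_, ?_, ?_⟩
        · have : ∀ i : Fin ℓ, ((if i = emb i0 then ({a0} : Finset (Fin m)) else ∅).card
              + (∅ : Finset (Fin n)).card) = if i = emb i0 then 1 else 0 := by
            intro i; split_ifs <;> simp
          rw [Finset.sum_congr rfl (fun i _ => this i), Finset.sum_ite_eq' Finset.univ (emb i0)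
            (fun _ => 1)]
          simp
        · intro a b h
          simp [hpatV] at h
        · intro i' a b h
          simp only [hpatV, Option.elim, Sum.elim_inr] at h
          by_cases hii : i' = i0
          · subst hii
            left
            have := ha0 a b (by simpa using h)
            simp [this]
          · simp [hii] at h
      · refine ⟨fun _ => ∅, fun i => if i = emb i0 then {b0} else ∅, ?_, ?_, ?_⟩
        · have : ∀ i : Fin ℓ, ((∅ : Finset (Fin m)).card
              + (if i = emb i0 then ({b0} : Finset (Fin n)) else ∅).card) = if i = emb i0 then 1 else 0 := by
            intro i; split_ifs <;> simp
          rw [Finset.sum_congr rfl (fun i _ => this i), Finset.sum_ite_eq' Finset.univ (emb i0)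
            (fun _ => 1)]
          simp
        · intro a b h
          simp [hpatV] at h
        · intro i' a b h
          simp only [hpatV, Option.elim, Sum.elim_inr] at h
          by_cases hii : i' = i0
          · subst hii
            right
            have := hb0 a b (by simpa using h)
            simp [this]
          · simp [hii] at h
  -- injectivity of patV
  have patVinj : Function.Injective patV := by
    intro p p' h
    match p, p' with
    | none, none => rfl
    | none, some (Sum.inl bp) =>
      exfalso
      have h1 : (0 : Fin m → Fin k0 → F) = bpMat bp := congrArg Prod.fst h
      exact bpMat_ne_zero bp h1.symm
    | none, some (Sum.inr (i0, bp)) =>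
      exfalso
      have h1 := congrArg Prod.snd h
      have h2 := congrFun h1 i0
      simp only [hpatV, Option.elim, Sum.elim_inr, Pi.zero_apply, if_pos rfl] at h2
      exact bpMat_ne_zero bp h2.symm
    | some (Sum.inl bp), none =>
      exfalso
      have h1 : bpMat bp = (0 : Fin m → Fin k0 → F) := congrArg Prod.fst h
      exact bpMat_ne_zero bp h1
    | some (Sum.inr (i0, bp)), none =>
      exfalso
      have h1 := congrArg Prod.snd h
      have h2 := congrFun h1 i0
      simp only [hpatV, Option.elim, Sum.elim_inr, Pi.zero_apply, if_pos rfl] at h2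
      exact bpMat_ne_zero bp h2
    | some (Sum.inl bp), some (Sum.inl bp') =>
      have h1 : bpMat bp = bpMat bp' := congrArg Prod.fst h
      rw [bpMat_injective h1]
    | some (Sum.inl bp), some (Sum.inr (i0, bp')) =>
      exfalso
      have h1 : bpMat bp = (0 : Fin m → Fin k0 → F) := congrArg Prod.fst h
      exact bpMat_ne_zero bp h1
    | some (Sum.inr (i0, bp)), some (Sum.inl bp') =>
      exfalso
      have h1 : (0 : Fin m → Fin k0 → F) = bpMat bp' := congrArg Prod.fst h
      exact bpMat_ne_zero bp' h1.symm
    | some (Sum.inr (i0, bp)), some (Sum.inr (i1, bp')) =>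
      have h1 := congrArg Prod.snd h
      have h2 := congrFun h1 i0
      simp only [hpatV, Option.elim, Sum.elim_inr, if_pos rfl] at h2
      have hii : i0 = i1 := by
        by_contra hc
        simp only [hc, if_true, if_false] at h2
        exact bpMat_ne_zero bp h2
      subst hii
      simp only [if_true, eq_self_iff_true] at h2
      rw [bpMat_injective h2]
  -- the big injection
  set Φ : (↥𝒞 × Option (BP F m k0 ⊕ (Fin t × BP F m n))) →
      (Fin m → Fin k0 → F) × (Fin t → Fin m → Fin n → F) :=
    fun Cp => ((fun a b => Cp.1.1 jF a (embC b)) + (patV Cp.2).1,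
      (fun i' a b => Cp.1.1 (emb i') a b) + (patV Cp.2).2) with hΦ
  have hΦinj : Function.Injective Φ := by
    intro x y hxy
    obtain ⟨⟨C, hC⟩, p⟩ := x
    obtain ⟨⟨D, hD⟩, p'⟩ := y
    simp only [hΦ, Prod.mk.injEq] at hxy
    obtain ⟨hA, hB⟩ := hxy
    have h1 : ∀ a b', C jF a (embC b') + (patV p).1 a b'
        = D jF a (embC b') + (patV p').1 a b' :=
      fun a b' => congrFun (congrFun hA a) b'
    have h2 : ∀ i' a b, C (emb i') a b + (patV p).2 i' a b
        = D (emb i') a b + (patV p').2 i' a b :=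
      fun i' a b => congrFun (congrFun (congrFun hB i') a) b
    have hbase : ∑ i : Fin ℓ, ((if (i : ℕ) < j then (Finset.univ : Finset (Fin n))
        else if (i : ℕ) = j then Finset.univ.filter (fun b : Fin n => (b : ℕ) < δ)
        else ∅)).card = j * n + δ := by
      have hcardi : ∀ i : Fin ℓ, ((if (i : ℕ) < j then (Finset.univ : Finset (Fin n))
          else if (i : ℕ) = j then Finset.univ.filter (fun b : Fin n => (b : ℕ) < δ)
          else ∅)).card = if (i : ℕ) < j then n else if (i : ℕ) = j then δ else 0 := by
        intro i
        split_ifs <;>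
          simp [card_filter_val_lt n δ (le_of_lt hδn), Finset.card_univ]
      rw [Finset.sum_congr rfl (fun i _ => hcardi i)]
      rw [Fin.sum_univ_eq_sum_range (fun i => if i < j then n else if i = j then δ else 0) ℓ]
      have hsplitf : ∀ i, (if i < j then n else if i = j then δ else 0)
          = (if i < j then n else 0) + (if i = j then δ else 0) := by
        intro i; split_ifs <;> omega
      rw [Finset.sum_congr rfl (fun i _ => hsplitf i), Finset.sum_add_distrib]
      have e1 : ∑ i ∈ Finset.range ℓ, (if i < j then n else 0) = j * n := by
        rw [← Finset.sum_filter]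
        have hf : (Finset.range ℓ).filter (fun i => i < j) = Finset.range j := by
          ext x
          simp only [Finset.mem_filter, Finset.mem_range]
          omega
        rw [hf, Finset.sum_const, Finset.card_range, smul_eq_mul]
      have e2 : ∑ i ∈ Finset.range ℓ, (if i = j then δ else 0) = δ := by
        rw [Finset.sum_ite_eq' (Finset.range ℓ) j (fun _ => δ)]
        simp [Finset.mem_range, hjl]
      omega
    have hCD : C = D := by
      by_contra hne
      obtain ⟨X1, Y1, hs1, h1a, h1b⟩ := lineCov p
      obtain ⟨X2, Y2, hs2, h2a, h2b⟩ := lineCov p'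
      have hcover : IsMultiCover (fun i => X1 i ∪ X2 i)
          (fun i => (if (i : ℕ) < j then (Finset.univ : Finset (Fin n))
            else if (i : ℕ) = j then Finset.univ.filter (fun b : Fin n => (b : ℕ) < δ) else ∅)
            ∪ (Y1 i ∪ Y2 i)) (C - D) := by
        intro i a b hz
        by_cases hlt : (i : ℕ) < j
        · right
          simp [hlt]
        · by_cases heqj : (i : ℕ) = j
          · by_cases hbδ : (b : ℕ) < δ
            · right
              simp [hlt, heqj, hbδ]
            · have hiF : i = jF := Fin.ext heqj
              have hbn : (b : ℕ) < n := b.isLt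
              have hb' : (b : ℕ) - δ < k0 := by omega
              have hbb : embC ⟨(b : ℕ) - δ, hb'⟩ = b := by
                apply Fin.ext
                show δ + ((b : ℕ) - δ) = (b : ℕ)
                omega
              have hval : C i a b - D i a b
                  = (patV p').1 a ⟨(b : ℕ) - δ, hb'⟩ - (patV p).1 a ⟨(b : ℕ) - δ, hb'⟩ := by
                have hh := h1 a ⟨(b : ℕ) - δ, hb'⟩
                rw [hbb, ← hiF] at hh
                linear_combination hh
              have hnz : (patV p').1 a ⟨(b : ℕ) - δ, hb'⟩ ≠ 0
                  ∨ (patV p).1 a ⟨(b : ℕ) - δ, hb'⟩ ≠ 0 := by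
                by_contra hcc
                push_neg at hcc
                apply hz
                show C i a b - D i a b = 0
                rw [hval, hcc.1, hcc.2, sub_zero]
              rcases hnz with hn1 | hn1
              · rcases h2a a _ hn1 with hx | hy
                · left; rw [hiF]; exact Finset.mem_union_right _ hx
                · right; rw [hiF, ← hbb]
                  exact Finset.mem_union_right _ (Finset.mem_union_right _ hy)
              · rcases h1a a _ hn1 with hx | hy
                · left; rw [hiF]; exact Finset.mem_union_left _ hx
                · right; rw [hiF, ← hbb]
                  exact Finset.mem_union_right _ (Finset.mem_union_left _ hy)
          · have hi' : (i : ℕ) - j - 1 < t := by have := i.isLt; omega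
            have hii : emb ⟨(i : ℕ) - j - 1, hi'⟩ = i := by
              apply Fin.ext
              simp only [hembdef]
              omega
            have hval : C i a b - D i a b
                = (patV p').2 ⟨(i : ℕ) - j - 1, hi'⟩ a b
                  - (patV p).2 ⟨(i : ℕ) - j - 1, hi'⟩ a b := by
              have hh := h2 ⟨(i : ℕ) - j - 1, hi'⟩ a b
              rw [hii] at hh
              linear_combination hh
            have hnz : (patV p').2 ⟨(i : ℕ) - j - 1, hi'⟩ a b ≠ 0
                ∨ (patV p).2 ⟨(i : ℕ) - j - 1, hi'⟩ a b ≠ 0 := by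
              by_contra hcc
              push_neg at hcc
              apply hz
              show C i a b - D i a b = 0
              rw [hval, hcc.1, hcc.2, sub_zero]
            rcases hnz with hn1 | hn1
            · rcases h2b _ a b hn1 with hx | hy
              · left; rw [← hii]; exact Finset.mem_union_right _ hx
              · right; rw [← hii]
                exact Finset.mem_union_right _ (Finset.mem_union_right _ hy)
            · rcases h1b _ a b hn1 with hx | hy
              · left; rw [← hii]; exact Finset.mem_union_left _ hx
              · right; rw [← hii]
                exact Finset.mem_union_right _ (Finset.mem_union_left _ hy)
      have hsize : mcSize (fun i => X1 i ∪ X2 i)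
          (fun i => (if (i : ℕ) < j then (Finset.univ : Finset (Fin n))
            else if (i : ℕ) = j then Finset.univ.filter (fun b : Fin n => (b : ℕ) < δ) else ∅)
            ∪ (Y1 i ∪ Y2 i)) ≤ j * n + δ + 2 := by
        unfold mcSize
        calc ∑ i : Fin ℓ, (((X1 i ∪ X2 i)).card
            + ((if (i : ℕ) < j then (Finset.univ : Finset (Fin n))
              else if (i : ℕ) = j then Finset.univ.filter (fun b : Fin n => (b : ℕ) < δ) else ∅)
              ∪ (Y1 i ∪ Y2 i)).card)
            ≤ ∑ i : Fin ℓ, ((((X1 i).card + (Y1 i).card) + ((X2 i).card + (Y2 i).card))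
              + ((if (i : ℕ) < j then (Finset.univ : Finset (Fin n))
                else if (i : ℕ) = j then Finset.univ.filter (fun b : Fin n => (b : ℕ) < δ)
                else ∅)).card) := by
              apply Finset.sum_le_sum
              intro i _
              have u1 := Finset.card_union_le (X1 i) (X2 i)
              have u2 := Finset.card_union_le (Y1 i) (Y2 i)
              have u3 := Finset.card_union_le
                (if (i : ℕ) < j then (Finset.univ : Finset (Fin n))
                  else if (i : ℕ) = j then Finset.univ.filter (fun b : Fin n => (b : ℕ) < δ)
                  else ∅) (Y1 i ∪ Y2 i)
              omega
        _ = (∑ i : Fin ℓ, ((X1 i).card + (Y1 i).card))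
              + (∑ i : Fin ℓ, ((X2 i).card + (Y2 i).card))
              + ∑ i : Fin ℓ, ((if (i : ℕ) < j then (Finset.univ : Finset (Fin n))
                else if (i : ℕ) = j then Finset.univ.filter (fun b : Fin n => (b : ℕ) < δ)
                else ∅)).card := by
              rw [← Finset.sum_add_distrib, ← Finset.sum_add_distrib]
        _ ≤ 1 + 1 + (j * n + δ) := by
              rw [hbase]
              omega
        _ ≤ j * n + δ + 2 := by omega
      have hwt : wtMC (C - D) ≤ j * n + δ + 2 :=
        le_trans (Nat.sInf_le ⟨_, _, hcover, rfl⟩) hsize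
      have hdw : d ≤ wtMC (C - D) := by
        rw [hd]
        exact Nat.sInf_le ⟨C, hC, D, hD, hne, rfl⟩
      omega
    subst hCD
    have hps : patV p = patV p' := by
      apply Prod.ext
      · funext a b'
        exact add_left_cancel (h1 a b')
      · funext i' a b
        exact add_left_cancel (h2 i' a b)
    have hpp := patVinj hps
    exact Prod.ext (Subtype.ext rfl) hpp
  -- cardinality bound
  have hcard := Fintype.card_le_of_injective Φ hΦinj
  have hC𝒞 : Fintype.card ↥𝒞 = q ^ (m * (ℓ * n - d + 1)) := by
    rw [← Nat.card_eq_fintype_card, Nat.card_coe_set_eq, hMMCD]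
  have hEP : Fintype.card (Option (BP F m k0 ⊕ (Fin t × BP F m n)))
      = (Fintype.card (BP F m k0) + t * Fintype.card (BP F m n)) + 1 := by
    simp [Fintype.card_option, Fintype.card_sum, Fintype.card_prod, Fintype.card_fin]
  have hV : Fintype.card ((Fin m → Fin k0 → F) × (Fin t → Fin m → Fin n → F))
      = q ^ (m * k0 + t * (m * n)) := by
    simp only [Fintype.card_prod, Fintype.card_fun, Fintype.card_fin, hqdef]
    rw [← pow_mul, ← pow_mul, ← pow_mul, ← pow_add]
    ring_nf
  -- exponent identity
  have hexp : m * k0 + t * (m * n) = m * (ℓ * n - d + 1) + 2 * m := by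
    have hLn : ℓ * n = j * n + n + t * n := by rw [htℓ]; ring
    have h4 : k0 + t * n = (ℓ * n - d + 1) + 2 := by omega
    calc m * k0 + t * (m * n) = m * (k0 + t * n) := by ring
    _ = m * ((ℓ * n - d + 1) + 2) := by rw [h4]
    _ = m * (ℓ * n - d + 1) + 2 * m := by ring
  -- the packing bound
  have hpack : (Fintype.card (BP F m k0) + t * Fintype.card (BP F m n)) + 1 ≤ q ^ (2 * m) := by
    rw [Fintype.card_prod, hC𝒞, hEP] at hcard
    rw [hV, hexp, pow_add] at hcard
    have hqpos : 0 < q ^ (m * (ℓ * n - d + 1)) := pow_pos (by omega) _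
    exact Nat.le_of_mul_le_mul_left (by linarith [hcard]) hqpos
  -- pass to integers
  clear_value jF emb embC patV Φ
  clear * - hpack hq hjδ hδn hjl htℓ hk0 hk0pos hjeq hd3 hdln hn hm hnm
  have hq1 : 1 ≤ q := by omega
  have hpow : ∀ k : ℕ, 1 + k * (q - 1) ≤ q ^ k := fun k => pow_lb q k hq1
  have castBP : ∀ k : ℕ, ((Fintype.card (BP F m k) : ℤ))
      = (m : ℤ) * ((q : ℤ) ^ k - 1) + (k : ℤ) * ((q : ℤ) ^ m - 1)
        - (m : ℤ) * (k : ℤ) * ((q : ℤ) - 1) := by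
    intro k
    rw [show q = Fintype.card F from rfl, card_BP]
    have e1 : 1 + k * (Fintype.card F - 1) ≤ Fintype.card F ^ k := hpow k
    have e2 : 1 + m * (Fintype.card F - 1) ≤ Fintype.card F ^ m := hpow m
    have e2' : 1 + (Fintype.card F - 1) * m ≤ Fintype.card F ^ m := by rw [mul_comm]; exact e2
    have hq1' : 1 ≤ Fintype.card F := hq1
    push_cast [Nat.cast_sub e1, Nat.cast_sub e2, Nat.cast_sub e2', Nat.cast_sub hq1']
    ring
  have hpackZ : 1 + ((Fintype.card (BP F m k0) : ℤ)
      + (t : ℤ) * (Fintype.card (BP F m n) : ℤ)) ≤ (q : ℤ) ^ (2 * m) := by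
    have := hpack
    push_cast at this ⊢
    linarith
  have hpowZ : ∀ k : ℕ, (1 : ℤ) + (k : ℤ) * ((q : ℤ) - 1) ≤ (q : ℤ) ^ k := by
    intro k
    have h1 : ((1 + k * (q - 1) : ℕ) : ℤ) ≤ ((q ^ k : ℕ) : ℤ) := by exact_mod_cast hpow k
    push_cast [Nat.cast_sub hq1] at h1
    exact h1
  have hqZ : (2 : ℤ) ≤ (q : ℤ) := by exact_mod_cast hq
  have hDpos : 0 < (m : ℤ) * ((q : ℤ) ^ n - 1) + (n : ℤ) * ((q : ℤ) ^ m - 1)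
      - (m : ℤ) * (n : ℤ) * ((q : ℤ) - 1) := by
    have h1 := hpowZ n
    have h2 : (q : ℤ) ≤ (q : ℤ) ^ m := le_self_pow₀ (by linarith) (by omega)
    have h3 : (0 : ℤ) ≤ (m : ℤ) := by positivity
    have h4 : (1 : ℤ) ≤ (n : ℤ) := by exact_mod_cast hn
    nlinarith [mul_nonneg h3 (show (0 : ℤ) ≤ (q : ℤ) ^ n - 1 - (n : ℤ) * ((q : ℤ) - 1) by
      linarith)]
  have hk0c : ((k0 : ℕ) : ℤ) = (n : ℤ) - (δ : ℤ) := by omega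
  have hk0e : k0 = n - δ := by omega
  have key : (t : ℤ) ≤ ((q : ℤ) ^ (2 * m) - 1 - (m : ℤ) * ((q : ℤ) ^ k0 - 1)
        - ((n : ℤ) - (δ : ℤ)) * ((q : ℤ) ^ m - 1)
        + (m : ℤ) * ((n : ℤ) - (δ : ℤ)) * ((q : ℤ) - 1))
      / ((m : ℤ) * ((q : ℤ) ^ n - 1) + (n : ℤ) * ((q : ℤ) ^ m - 1)
        - (m : ℤ) * (n : ℤ) * ((q : ℤ) - 1)) := by
    rw [Int.le_ediv_iff_mul_le hDpos]
    have hc0 := castBP k0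
    have hcn := castBP n
    rw [hk0c] at hc0
    rw [hc0, hcn] at hpackZ
    linarith [hpackZ]
  have hlc : (ℓ : ℤ) = (t : ℤ) + (j : ℤ) + 1 := by omega
  rw [← hjeq, ← hk0e]
  have hdiv := key
  linarith
end

section
/- Assume n = m_1 = ⋯ = m_ℓ = n_1 = ⋯ = n_ℓ and q is even. If n or ℓ is even, then there is no perfect code in (𝔽_q^{n×n})^ℓ of minimum multi-cover distance d = 3; that is, there is no code 𝒞 ⊆ (𝔽_q^{n×n})^ℓ with d_MC(𝒞) = 3 and (1 + ℓn(2(q^n − 1) − n(q − 1))) · |𝒞| = q^{ℓn²}. -/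
open Finset

/-- Bernoulli-type bound: `n(q-1) + 1 ≤ q^n` for `q ≥ 2`. -/
lemma aux_bern (q n : ℕ) (hq : 2 ≤ q) : n * (q - 1) + 1 ≤ q ^ n := by
  induction n with
  | zero => simp
  | succ n ih =>
    have h1 : 1 ≤ q ^ n := Nat.one_le_pow _ _ (by omega)
    have h2 : q - 1 ≤ q ^ n * (q - 1) := Nat.le_mul_of_pos_left _ (by omega)
    have hmul : q ^ n * (q - 1) + q ^ n = q ^ n * q := by
      rw [← Nat.mul_succ]; congr 1; omega
    rw [pow_succ, ← hmul, Nat.succ_mul]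
    linarith

/-- nonexistence of perfect codes of minimum multi-cover distance `3` over
fields of even characteristic, when `n` or `ℓ` is even. -/
theorem no_perfect_code_MC {F : Type*} [Field F] [Fintype F] (ℓ n : ℕ)
    (hℓ : 0 < ℓ) (hn : 0 < n)
    (hq : Even (Fintype.card F)) (hpar : Even n ∨ Even ℓ) :
    ¬ ∃ 𝒞 : Set (MCSpace F (fun _ : Fin ℓ => n) (fun _ : Fin ℓ => n)),
        dMC 𝒞 = 3 ∧
        (1 + ℓ * n * (2 * ((Fintype.card F) ^ n - 1) - n * (Fintype.card F - 1))) * 𝒞.ncard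
          = (Fintype.card F) ^ (ℓ * n ^ 2) := by
  rintro ⟨𝒞, -, heq⟩
  set q := Fintype.card F with hqdef
  have hq2 : 2 ≤ q := Fintype.one_lt_card
  set t := 2 * (q ^ n - 1) - n * (q - 1) with ht
  set B := 1 + ℓ * n * t with hB
  -- `t ≥ n ≥ 1`, so `B ≥ 2`
  have hbern : n * (q - 1) + 1 ≤ q ^ n := aux_bern q n hq2
  have hqn1 : n * 1 ≤ n * (q - 1) := Nat.mul_le_mul_left _ (by omega)
  have ht1 : n ≤ t := by omega
  have hB2 : 2 ≤ B := by
    have : 1 * 1 * 1 ≤ ℓ * n * t := Nat.mul_le_mul (Nat.mul_le_mul hℓ hn) (by omega)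
    omega
  -- `B` is odd
  have hEvenlnt : Even (ℓ * n * t) := by
    rcases hpar with h | h
    · exact (h.mul_left ℓ).mul_right t
    · exact ((h.mul_right n).mul_right t)
  have hBodd : Odd B := by
    obtain ⟨c, hc⟩ := hEvenlnt
    exact ⟨c, by omega⟩
  -- the field has cardinality a power of `2`
  obtain ⟨p, -, k, hp, hcard⟩ := FiniteField.card' F
  have hp2 : p = 2 := by
    have h2p : 2 ∣ p := by
      have : 2 ∣ p ^ (k : ℕ) := by rw [← hcard]; exact hq.two_dvd
      exact Nat.Prime.dvd_of_dvd_pow Nat.prime_two this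
    rcases (hp.eq_one_or_self_of_dvd 2 h2p) with h | h <;> omega
  -- `B` divides a power of `2`, hence `B = 1`, contradiction
  have hdvd : B ∣ 2 ^ ((k : ℕ) * (ℓ * n ^ 2)) := by
    refine ⟨𝒞.ncard, ?_⟩
    rw [heq, hqdef, hcard, hp2, pow_mul]
  have hcop : Nat.Coprime B (2 ^ ((k : ℕ) * (ℓ * n ^ 2))) :=
    (Nat.coprime_two_right.mpr hBodd).pow_right _
  have := hcop.eq_one_of_dvd hdvd
  omega
end

section
/- Let m, n, r be positive integers with 1 ≤ r ≤ min{m,n}, and let X ⊆ {1,…,m}, Y ⊆ {1,…,n} with |X| = s and |Y| = r − s. Then the number of m × n matrices C over 𝔽_q such that (X,Y) is a minimal cover of C (i.e., (X,Y) is a cover of C and no pair (X′,Y′) with X′ ⊆ X, Y′ ⊆ Y and (X′,Y′) ≠ (X,Y) is a cover of C) equals (q^{m−s} − 1)^{r−s} (q^{n−r+s} − 1)^s q^{s(r−s)}. Consequently, S_r^{m,n} ≤ Σ_{s=0}^r binom(m,s) binom(n,r−s) (q^{m−s} − 1)^{r−s} (q^{n−r+s} − 1)^s q^{s(r−s)}.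 -/
open Finset

/-- `(X, Y)` is a cover of the matrix `C`. -/
def IsCoverOf {F : Type*} [Field F] {m n : ℕ} (X : Finset (Fin m)) (Y : Finset (Fin n))
    (C : Matrix (Fin m) (Fin n) F) : Prop :=
  ∀ a b, C a b ≠ 0 → a ∈ X ∨ b ∈ Y


section Helpers

variable {F : Type*} [Field F] [Fintype F] {m n : ℕ}

lemma minCover_iff (X : Finset (Fin m)) (Y : Finset (Fin n)) (C : Matrix (Fin m) (Fin n) F) :
    (IsCoverOf X Y C ∧ ∀ X' ⊆ X, ∀ Y' ⊆ Y, (X', Y') ≠ (X, Y) → ¬ IsCoverOf X' Y' C) ↔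
    ((∀ a b, a ∉ X → b ∉ Y → C a b = 0) ∧ (∀ a ∈ X, ∃ b, b ∉ Y ∧ C a b ≠ 0)
      ∧ (∀ b ∈ Y, ∃ a, a ∉ X ∧ C a b ≠ 0)) := by
  constructor
  · rintro ⟨hc, hmin⟩
    refine ⟨fun a b ha hb => ?_, fun a ha => ?_, fun b hb => ?_⟩
    · by_contra h
      rcases hc a b h with h' | h' <;> tauto
    · have hne : ((X.erase a, Y) : Finset (Fin m) × Finset (Fin n)) ≠ (X, Y) := by
        simp only [ne_eq, Prod.mk.injEq, not_and]
        intro hXX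
        exact absurd (Finset.erase_eq_self.mp hXX ha) (fun h => h)
      have h := hmin (X.erase a) (Finset.erase_subset _ _) Y subset_rfl hne
      simp only [IsCoverOf, not_forall] at h
      obtain ⟨a', b, hC, hnab⟩ := h
      rw [not_or] at hnab
      obtain ⟨ha', hb⟩ := hnab
      rcases hc a' b hC with h' | h'
      · have : a' = a := by
          by_contra hne'
          exact ha' (Finset.mem_erase.mpr ⟨hne', h'⟩)
        exact ⟨b, hb, this ▸ hC⟩
      · exact absurd h' hb
    · have hne : ((X, Y.erase b) : Finset (Fin m) × Finset (Fin n)) ≠ (X, Y) := by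
        simp only [ne_eq, Prod.mk.injEq, not_and]
        intro _ hYY
        exact absurd (Finset.erase_eq_self.mp hYY hb) (fun h => h)
      have h := hmin X subset_rfl (Y.erase b) (Finset.erase_subset _ _) hne
      simp only [IsCoverOf, not_forall] at h
      obtain ⟨a, b', hC, hnab⟩ := h
      rw [not_or] at hnab
      obtain ⟨ha, hb'⟩ := hnab
      rcases hc a b' hC with h' | h'
      · exact absurd h' ha
      · have : b' = b := by
          by_contra hne'
          exact hb' (Finset.mem_erase.mpr ⟨hne', h'⟩)
        exact ⟨a, ha, this ▸ hC⟩
  · rintro ⟨h0, hrow, hcol⟩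
    constructor
    · intro a b hC
      by_contra h
      rw [not_or] at h
      exact hC (h0 a b h.1 h.2)
    · intro X' hX' Y' hY' hne hcov
      have : X' ≠ X ∨ Y' ≠ Y := by
        by_contra h
        rw [not_or, not_not, not_not] at h
        exact hne (by rw [Prod.mk.injEq]; exact ⟨h.1, h.2⟩)
      rcases this with h | h
      · obtain ⟨a, haX, haX'⟩ := Finset.exists_of_ssubset (lt_of_le_of_ne hX' h)
        obtain ⟨b, hbY, hC⟩ := hrow a haX
        rcases hcov a b hC with h' | h'
        · exact haX' h'
        · exact hbY (hY' h')
      · obtain ⟨b, hbY, hbY'⟩ := Finset.exists_of_ssubset (lt_of_le_of_ne hY' h)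
        obtain ⟨a, haX, hC⟩ := hcol b hbY
        rcases hcov a b hC with h' | h'
        · exact haX (hX' h')
        · exact hbY' h'

lemma card_nonzero_fun {α : Type*} [Fintype α] :
    Nat.card {g : α → F // g ≠ 0} = Fintype.card F ^ Fintype.card α - 1 := by
  classical
  rw [Nat.card_eq_fintype_card]
  have : Fintype.card {g : α → F // ¬ (g = 0)}
      = Fintype.card (α → F) - Fintype.card {g : α → F // g = 0} :=
    Fintype.card_subtype_compl _
  simp only [ne_eq]
  rw [this, Fintype.card_fun]
  congr 1

lemma ncard_minCoverSet (X : Finset (Fin m)) (Y : Finset (Fin n)) :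
    Set.ncard {C : Matrix (Fin m) (Fin n) F |
      (∀ a b, a ∉ X → b ∉ Y → C a b = 0) ∧ (∀ a ∈ X, ∃ b, b ∉ Y ∧ C a b ≠ 0)
        ∧ (∀ b ∈ Y, ∃ a, a ∉ X ∧ C a b ≠ 0)}
    = (Fintype.card F ^ Xᶜ.card - 1) ^ Y.card * (Fintype.card F ^ Yᶜ.card - 1) ^ X.card
        * Fintype.card F ^ (X.card * Y.card) := by
  classical
  rw [← Nat.card_coe_set_eq]
  have e : {C : Matrix (Fin m) (Fin n) F |
      (∀ a b, a ∉ X → b ∉ Y → C a b = 0) ∧ (∀ a ∈ X, ∃ b, b ∉ Y ∧ C a b ≠ 0)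
        ∧ (∀ b ∈ Y, ∃ a, a ∉ X ∧ C a b ≠ 0)} ≃
      ((↥Y → {h : ↥Xᶜ → F // h ≠ 0}) × (↥X → {g : ↥Yᶜ → F // g ≠ 0}) × (↥X × ↥Y → F)) := by
    refine ⟨fun C => ⟨fun b => ⟨fun a => C.1 a.1 b.1, ?_⟩, fun a => ⟨fun b => C.1 a.1 b.1, ?_⟩,
        fun p => C.1 p.1.1 p.2.1⟩, fun t => ⟨fun a b =>
        if ha : a ∈ X then (if hb : b ∈ Y then t.2.2 (⟨a, ha⟩, ⟨b, hb⟩)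
          else (t.2.1 ⟨a, ha⟩).1 ⟨b, Finset.mem_compl.mpr hb⟩)
        else (if hb : b ∈ Y then (t.1 ⟨b, hb⟩).1 ⟨a, Finset.mem_compl.mpr ha⟩ else 0), ?_, ?_, ?_⟩,
        ?_, ?_⟩
    · obtain ⟨a, ha, hC⟩ := C.2.2.2 b.1 b.2
      rw [Function.ne_iff]
      exact ⟨⟨a, Finset.mem_compl.mpr ha⟩, hC⟩
    · obtain ⟨b, hb, hC⟩ := C.2.2.1 a.1 a.2
      rw [Function.ne_iff]
      exact ⟨⟨b, Finset.mem_compl.mpr hb⟩, hC⟩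
    · intro a b ha hb
      simp [dif_neg ha, dif_neg hb]
    · intro a ha
      have hg := (t.2.1 ⟨a, ha⟩).2
      rw [Function.ne_iff] at hg
      obtain ⟨b, hgb⟩ := hg
      refine ⟨b.1, Finset.mem_compl.mp b.2, ?_⟩
      beta_reduce
      rw [dif_pos ha, dif_neg (Finset.mem_compl.mp b.2)]
      simpa using hgb
    · intro b hb
      have hg := (t.1 ⟨b, hb⟩).2
      rw [Function.ne_iff] at hg
      obtain ⟨a, hga⟩ := hg
      refine ⟨a.1, Finset.mem_compl.mp a.2, ?_⟩
      beta_reduce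
      rw [dif_neg (Finset.mem_compl.mp a.2), dif_pos hb]
      simpa using hga
    · intro C
      apply Subtype.ext
      funext a b
      dsimp only
      split_ifs with ha hb hb
      · rfl
      · rfl
      · rfl
      · exact (C.2.1 a b ha hb).symm
    · intro t
      refine Prod.ext ?_ (Prod.ext ?_ ?_)
      · funext b
        apply Subtype.ext
        funext a
        have ha := Finset.mem_compl.mp a.2
        dsimp only
        rw [dif_neg ha, dif_pos b.2]
      · funext a
        apply Subtype.ext
        funext b
        have hb := Finset.mem_compl.mp b.2
        dsimp only
        rw [dif_pos a.2, dif_neg hb]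
      · funext p
        dsimp only
        rw [dif_pos p.1.2, dif_pos p.2.2]
  rw [Nat.card_congr e, Nat.card_prod, Nat.card_prod, Nat.card_fun, Nat.card_fun, Nat.card_fun,
    card_nonzero_fun, card_nonzero_fun]
  simp only [Nat.card_eq_fintype_card, Fintype.card_coe, Fintype.card_prod,
    Finset.card_compl, Fintype.card_fin]
  ring

lemma ncard_minCover_eq (r s : ℕ) (hrn : r ≤ n) (hs : s ≤ r)
    (X : Finset (Fin m)) (Y : Finset (Fin n)) (hX : X.card = s) (hY : Y.card = r - s) :
    Set.ncard {C : Matrix (Fin m) (Fin n) F | IsCoverOf X Y C ∧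
        ∀ X' ⊆ X, ∀ Y' ⊆ Y, (X', Y') ≠ (X, Y) → ¬ IsCoverOf X' Y' C}
      = (Fintype.card F ^ (m - s) - 1) ^ (r - s) * (Fintype.card F ^ (n - r + s) - 1) ^ s
        * Fintype.card F ^ (s * (r - s)) := by
  have hset : {C : Matrix (Fin m) (Fin n) F | IsCoverOf X Y C ∧
      ∀ X' ⊆ X, ∀ Y' ⊆ Y, (X', Y') ≠ (X, Y) → ¬ IsCoverOf X' Y' C} =
      {C : Matrix (Fin m) (Fin n) F |
      (∀ a b, a ∉ X → b ∉ Y → C a b = 0) ∧ (∀ a ∈ X, ∃ b, b ∉ Y ∧ C a b ≠ 0)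
        ∧ (∀ b ∈ Y, ∃ a, a ∉ X ∧ C a b ≠ 0)} := Set.ext fun C => minCover_iff X Y C
  rw [hset, ncard_minCoverSet, Finset.card_compl, Finset.card_compl, Fintype.card_fin,
    Fintype.card_fin, hX, hY]
  have h1 : n - (r - s) = n - r + s := by omega
  rw [h1]

lemma ncard_biUnion_le {α ι : Type*} (s : Finset ι) (f : ι → Set α) :
    (⋃ i ∈ s, f i).ncard ≤ ∑ i ∈ s, (f i).ncard := by
  classical
  induction s using Finset.induction_on with
  | empty => simp
  | @insert a s ha ih =>
    rw [Finset.set_biUnion_insert, Finset.sum_insert ha]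
    exact le_trans (Set.ncard_union_le _ _) (Nat.add_le_add_left ih _)

lemma exists_minimal_cover {r : ℕ} (C : Matrix (Fin m) (Fin n) F) (hC : coverWt C = r) :
    ∃ X Y, X.card + Y.card = r ∧ IsCoverOf X Y C ∧
      ∀ X' ⊆ X, ∀ Y' ⊆ Y, (X', Y') ≠ (X, Y) → ¬ IsCoverOf X' Y' C := by
  have hne : {r | ∃ (X : Finset (Fin m)) (Y : Finset (Fin n)),
      (∀ a b, C a b ≠ 0 → a ∈ X ∨ b ∈ Y) ∧ X.card + Y.card = r}.Nonempty :=
    ⟨Finset.univ.card + (∅ : Finset (Fin n)).card, Finset.univ, ∅,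
      fun a b _ => Or.inl (Finset.mem_univ a), rfl⟩
  have hmem : coverWt C ∈ {r | ∃ (X : Finset (Fin m)) (Y : Finset (Fin n)),
      (∀ a b, C a b ≠ 0 → a ∈ X ∨ b ∈ Y) ∧ X.card + Y.card = r} := Nat.sInf_mem hne
  rw [hC] at hmem
  obtain ⟨X, Y, hcov, hcard⟩ := hmem
  refine ⟨X, Y, hcard, hcov, ?_⟩
  intro X' hX' Y' hY' hne' hcov'
  have h1 : X'.card ≤ X.card := Finset.card_le_card hX'
  have h2 : Y'.card ≤ Y.card := Finset.card_le_card hY'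
  have hlt : X'.card + Y'.card < r := by
    have : X' ≠ X ∨ Y' ≠ Y := by
      by_contra h
      rw [not_or, not_not, not_not] at h
      exact hne' (by rw [Prod.mk.injEq]; exact ⟨h.1, h.2⟩)
    rcases this with h | h
    · have := Finset.card_lt_card (lt_of_le_of_ne hX' h)
      omega
    · have := Finset.card_lt_card (lt_of_le_of_ne hY' h)
      omega
  have hle : coverWt C ≤ X'.card + Y'.card := Nat.sInf_le ⟨X', Y', hcov', rfl⟩
  omega

end Helpers

/-- the number of `m × n` matrices having a given pair `(X, Y)` with `|X| = s`,
`|Y| = r - s` as a minimal cover, and the resulting upper bound on `S_r^{m,n}`. -/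
theorem minimal_cover_count {F : Type*} [Field F] [Fintype F] (m n r s : ℕ)
    (hm : 0 < m) (hn : 0 < n) (hr1 : 1 ≤ r) (hr : r ≤ min m n) (hs : s ≤ r)
    (X : Finset (Fin m)) (Y : Finset (Fin n)) (hX : X.card = s) (hY : Y.card = r - s) :
    Set.ncard {C : Matrix (Fin m) (Fin n) F | IsCoverOf X Y C ∧
        ∀ X' ⊆ X, ∀ Y' ⊆ Y, (X', Y') ≠ (X, Y) → ¬ IsCoverOf X' Y' C}
      = (Fintype.card F ^ (m - s) - 1) ^ (r - s) * (Fintype.card F ^ (n - r + s) - 1) ^ s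
        * Fintype.card F ^ (s * (r - s)) ∧
    Scount F m n r ≤ ∑ t ∈ Finset.range (r + 1),
      m.choose t * n.choose (r - t) * (Fintype.card F ^ (m - t) - 1) ^ (r - t)
        * (Fintype.card F ^ (n - r + t) - 1) ^ t * Fintype.card F ^ (t * (r - t)) := by
  have hrn : r ≤ n := le_trans hr (min_le_right m n)
  constructor
  · exact ncard_minCover_eq r s hrn hs X Y hX hY
  · have hsub : {C : Matrix (Fin m) (Fin n) F | coverWt C = r} ⊆
        ⋃ t ∈ Finset.range (r + 1), ⋃ X' ∈ Finset.univ.powersetCard t,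
          ⋃ Y' ∈ Finset.univ.powersetCard (r - t),
            {C : Matrix (Fin m) (Fin n) F | IsCoverOf X' Y' C ∧
              ∀ X'' ⊆ X', ∀ Y'' ⊆ Y', (X'', Y'') ≠ (X', Y') → ¬ IsCoverOf X'' Y'' C} := by
      intro C hC
      obtain ⟨X', Y', hcard, hcov, hmin⟩ := exists_minimal_cover C hC
      simp only [Set.mem_iUnion, exists_prop]
      exact ⟨X'.card, Finset.mem_range.mpr (by omega), X',
        Finset.mem_powersetCard.mpr ⟨Finset.subset_univ _, rfl⟩, Y',
        Finset.mem_powersetCard.mpr ⟨Finset.subset_univ _, by omega⟩, hcov, hmin⟩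
    calc Scount F m n r
        ≤ (⋃ t ∈ Finset.range (r + 1), ⋃ X' ∈ Finset.univ.powersetCard t,
          ⋃ Y' ∈ Finset.univ.powersetCard (r - t),
            {C : Matrix (Fin m) (Fin n) F | IsCoverOf X' Y' C ∧
              ∀ X'' ⊆ X', ∀ Y'' ⊆ Y', (X'', Y'') ≠ (X', Y') → ¬ IsCoverOf X'' Y'' C}).ncard :=
          Set.ncard_le_ncard hsub (Set.toFinite _)
      _ ≤ ∑ t ∈ Finset.range (r + 1), (⋃ X' ∈ Finset.univ.powersetCard t,
          ⋃ Y' ∈ Finset.univ.powersetCard (r - t),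
            {C : Matrix (Fin m) (Fin n) F | IsCoverOf X' Y' C ∧
              ∀ X'' ⊆ X', ∀ Y'' ⊆ Y', (X'', Y'') ≠ (X', Y') → ¬ IsCoverOf X'' Y'' C}).ncard :=
          ncard_biUnion_le _ _
      _ ≤ ∑ t ∈ Finset.range (r + 1), ∑ X' ∈ Finset.univ.powersetCard t,
          ∑ Y' ∈ Finset.univ.powersetCard (r - t),
            ({C : Matrix (Fin m) (Fin n) F | IsCoverOf X' Y' C ∧
              ∀ X'' ⊆ X', ∀ Y'' ⊆ Y', (X'', Y'') ≠ (X', Y') → ¬ IsCoverOf X'' Y'' C}).ncard := by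
          refine Finset.sum_le_sum fun t _ => le_trans (ncard_biUnion_le _ _) ?_
          exact Finset.sum_le_sum fun X' _ => ncard_biUnion_le _ _
      _ = ∑ t ∈ Finset.range (r + 1),
            m.choose t * n.choose (r - t) * (Fintype.card F ^ (m - t) - 1) ^ (r - t)
              * (Fintype.card F ^ (n - r + t) - 1) ^ t * Fintype.card F ^ (t * (r - t)) := by
          refine Finset.sum_congr rfl fun t ht => ?_
          have ht' : t ≤ r := by
            have := Finset.mem_range.mp ht
            omega
          have hval : ∀ X' ∈ Finset.univ.powersetCard t, ∀ Y' ∈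
              Finset.univ.powersetCard (r - t),
              ({C : Matrix (Fin m) (Fin n) F | IsCoverOf X' Y' C ∧
                ∀ X'' ⊆ X', ∀ Y'' ⊆ Y', (X'', Y'') ≠ (X', Y') → ¬ IsCoverOf X'' Y'' C}).ncard
              = (Fintype.card F ^ (m - t) - 1) ^ (r - t)
                * (Fintype.card F ^ (n - r + t) - 1) ^ t * Fintype.card F ^ (t * (r - t)) := by
            intro X' hX' Y' hY'
            exact ncard_minCover_eq r t hrn ht' X' Y'
              (Finset.mem_powersetCard.mp hX').2 (Finset.mem_powersetCard.mp hY').2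
          rw [Finset.sum_congr rfl fun X' hX' => Finset.sum_congr rfl fun Y' hY' =>
            hval X' hX' Y' hY']
          simp only [Finset.sum_const, smul_eq_mul, Finset.card_powersetCard,
            Finset.card_univ, Fintype.card_fin]
          ring
end

section
/- Let 𝒞 ⊆ Π be a linear code and X = (X_i,Y_i)_{i=1}^ℓ a multi-cover. Then: (1) (𝒞_X)^⊥ = (𝒞^⊥)^X and (𝒞^X)^⊥ = (𝒞^⊥)_X; (2) dim(𝒞_X) ≥ dim(𝒞) − Σ_{i=1}^ℓ ( n_i|X_i| + m_i|Y_i| − |X_i|·|Y_i| ); (3) dim(𝒞^X) ≥ dim(𝒞) − Σ_{i=1}^ℓ ( n_i|X_i| + m_i|Y_i| − |X_i|·|Y_i| ); (4) if 𝒞_X has at least two elements and d_MC(𝒞) > |X|, then d_MC(𝒞_X) ≥ d_MC(𝒞) − |X|; (5) if 𝒞^X has at least two elements, then d_MC(𝒞^X) ≥ d_MC(𝒞). -/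
open Finset
set_option linter.unusedSectionVars false

section AuxMC

variable {F : Type*} [Field F] [Fintype F] {ℓ : ℕ} {m n : Fin ℓ → ℕ}
variable (X : (i : Fin ℓ) → Finset (Fin (m i))) (Y : (i : Fin ℓ) → Finset (Fin (n i)))

lemma cardCX (i : Fin ℓ) : ((X i)ᶜ).card = m i - (X i).card := by
  simp [Finset.card_compl]

lemma cardCY (i : Fin ℓ) : ((Y i)ᶜ).card = n i - (Y i).card := by
  simp [Finset.card_compl]

/-- The increasing enumeration of the rows outside `X i`. -/
noncomputable def eX (i : Fin ℓ) (a : Fin (m i - (X i).card)) : Fin (m i) :=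
  ((X i)ᶜ.orderIsoOfFin (cardCX X i) a : Fin (m i))

noncomputable def eY (i : Fin ℓ) (b : Fin (n i - (Y i).card)) : Fin (n i) :=
  ((Y i)ᶜ.orderIsoOfFin (cardCY Y i) b : Fin (n i))

lemma projMC_apply (C : MCSpace F m n) (i : Fin ℓ) (a b) :
    projMC X Y C i a b = C i (eX X i a) (eY Y i b) := rfl

lemma eX_not_mem (i : Fin ℓ) (a) : eX X i a ∉ X i :=
  Finset.mem_compl.1 ((X i)ᶜ.orderIsoOfFin (cardCX X i) a).2

lemma eY_not_mem (i : Fin ℓ) (b) : eY Y i b ∉ Y i :=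
  Finset.mem_compl.1 ((Y i)ᶜ.orderIsoOfFin (cardCY Y i) b).2

lemma eX_injective (i : Fin ℓ) : Function.Injective (eX X i) := by
  intro a a' h
  exact ((X i)ᶜ.orderIsoOfFin (cardCX X i)).injective (Subtype.ext h)

lemma eY_injective (i : Fin ℓ) : Function.Injective (eY Y i) := by
  intro a a' h
  exact ((Y i)ᶜ.orderIsoOfFin (cardCY Y i)).injective (Subtype.ext h)

lemma eX_surj (i : Fin ℓ) (a : Fin (m i)) (ha : a ∉ X i) : ∃ a', eX X i a' = a := by
  refine ⟨((X i)ᶜ.orderIsoOfFin (cardCX X i)).symm ⟨a, Finset.mem_compl.2 ha⟩, ?_⟩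
  simp [eX]

lemma eY_surj (i : Fin ℓ) (b : Fin (n i)) (hb : b ∉ Y i) : ∃ b', eY Y i b' = b := by
  refine ⟨((Y i)ᶜ.orderIsoOfFin (cardCY Y i)).symm ⟨b, Finset.mem_compl.2 hb⟩, ?_⟩
  simp [eY]

/-- Extension by zero. -/
noncomputable def extMC
    (D : MCSpace F (fun i => m i - (X i).card) (fun i => n i - (Y i).card)) :
    MCSpace F m n := fun i a b =>
  if ha : a ∈ X i then 0 else if hb : b ∈ Y i then 0 else
    D i (((X i)ᶜ.orderIsoOfFin (cardCX X i)).symm ⟨a, Finset.mem_compl.2 ha⟩)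
        (((Y i)ᶜ.orderIsoOfFin (cardCY Y i)).symm ⟨b, Finset.mem_compl.2 hb⟩)

lemma proj_extMC (D : MCSpace F (fun i => m i - (X i).card) (fun i => n i - (Y i).card)) :
    projMC X Y (extMC X Y D) = D := by
  funext i a b
  rw [projMC_apply, extMC, dif_neg (eX_not_mem X i a), dif_neg (eY_not_mem Y i b)]
  congr 1
  · rw [show (⟨eX X i a, _⟩ : {x // x ∈ (X i)ᶜ}) = (X i)ᶜ.orderIsoOfFin (cardCX X i) a from
      Subtype.ext rfl, OrderIso.symm_apply_apply]
  · rw [show (⟨eY Y i b, _⟩ : {x // x ∈ (Y i)ᶜ}) = (Y i)ᶜ.orderIsoOfFin (cardCY Y i) b from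
      Subtype.ext rfl, OrderIso.symm_apply_apply]

lemma extMC_mem_zeroOn (D : MCSpace F (fun i => m i - (X i).card) (fun i => n i - (Y i).card)) :
    extMC X Y D ∈ zeroOnMC X Y := by
  intro i a b hab
  rcases hab with ha | hb
  · simp [extMC, ha]
  · by_cases ha : a ∈ X i <;> simp [extMC, ha, hb]

lemma extMC_proj {C : MCSpace F m n} (hC : C ∈ zeroOnMC X Y) :
    extMC X Y (projMC X Y C) = C := by
  funext i a b
  by_cases ha : a ∈ X i
  · rw [extMC, dif_pos ha, hC i a b (Or.inl ha)]
  by_cases hb : b ∈ Y i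
  · rw [extMC, dif_neg ha, dif_pos hb, hC i a b (Or.inr hb)]
  rw [extMC, dif_neg ha, dif_neg hb, projMC_apply]
  congr 1 <;> simp [eX, eY]

/-- Reindexing sums along `eX`. -/
lemma sum_eX (i : Fin ℓ) (g : Fin (m i) → F) (hg : ∀ a ∈ X i, g a = 0) :
    ∑ a', g (eX X i a') = ∑ a, g a := by
  rw [Fintype.sum_equiv ((X i)ᶜ.orderIsoOfFin (cardCX X i)).toEquiv
    (fun a' => g (eX X i a')) (fun x => g x) (fun a' => rfl)]
  rw [Finset.sum_coe_sort ((X i)ᶜ) g]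
  exact Finset.sum_subset (Finset.subset_univ _)
    (fun x _ hx => hg x (by simpa using hx))

lemma sum_eY (i : Fin ℓ) (g : Fin (n i) → F) (hg : ∀ b ∈ Y i, g b = 0) :
    ∑ b', g (eY Y i b') = ∑ b, g b := by
  rw [Fintype.sum_equiv ((Y i)ᶜ.orderIsoOfFin (cardCY Y i)).toEquiv
    (fun b' => g (eY Y i b')) (fun x => g x) (fun b' => rfl)]
  rw [Finset.sum_coe_sort ((Y i)ᶜ) g]
  exact Finset.sum_subset (Finset.subset_univ _)
    (fun x _ hx => hg x (by simpa using hx))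

/-- The key inner-product compatibility. -/
lemma innerMC_proj (C D : MCSpace F m n)
    (h : ∀ i a b, a ∈ X i ∨ b ∈ Y i → C i a b * D i a b = 0) :
    innerMC (projMC X Y C) (projMC X Y D) = innerMC C D := by
  unfold innerMC
  refine Finset.sum_congr rfl fun i _ => ?_
  simp only [projMC_apply]
  rw [sum_eX X i (fun a => ∑ b, C i a (eY Y i b) * D i a (eY Y i b))
    (fun a ha => Finset.sum_eq_zero fun b _ => h i a _ (Or.inl ha))]
  refine Finset.sum_congr rfl fun a _ => ?_
  exact sum_eY Y i (fun b => C i a b * D i a b) (fun b hb => h i a b (Or.inr hb))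

end AuxMC


section AuxLin

variable {F : Type*} [Field F] [Fintype F] {ℓ : ℕ} {m n : Fin ℓ → ℕ}

lemma innerMC_symm (C D : MCSpace F m n) : innerMC C D = innerMC D C := by
  simp [innerMC, mul_comm]

lemma finrank_MCSpace : Module.finrank F (MCSpace F m n) = ∑ i, m i * n i := by
  rw [Module.finrank_pi_fintype]
  refine Finset.sum_congr rfl fun i _ => ?_
  rw [Module.finrank_matrix]
  simp

/-- The map `D ↦ ⟨·, D⟩` into the dual space. -/
noncomputable def innerDualMap : MCSpace F m n →ₗ[F] Module.Dual F (MCSpace F m n) where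
  toFun D :=
    { toFun := fun C => innerMC C D
      map_add' := fun C C' => by
        simp only [innerMC, Pi.add_apply, Matrix.add_apply, add_mul, Finset.sum_add_distrib]
      map_smul' := fun c C => by
        simp only [innerMC, Pi.smul_apply, Matrix.smul_apply, smul_eq_mul, mul_assoc,
          Finset.mul_sum, RingHom.id_apply] }
  map_add' D D' := by
    refine LinearMap.ext fun C => ?_
    simp only [innerMC, Pi.add_apply, Matrix.add_apply, mul_add, Finset.sum_add_distrib,
      LinearMap.coe_mk, AddHom.coe_mk, LinearMap.add_apply]
  map_smul' c D := by
    refine LinearMap.ext fun C => ?_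
    simp only [innerMC, Pi.smul_apply, Matrix.smul_apply, smul_eq_mul, mul_left_comm,
      Finset.mul_sum, RingHom.id_apply, LinearMap.coe_mk, AddHom.coe_mk, LinearMap.smul_apply]

lemma innerDualMap_injective : Function.Injective (innerDualMap (F := F) (m := m) (n := n)) := by
  rw [injective_iff_map_eq_zero]
  intro D hD
  funext i a b
  classical
  have h := congrArg (fun f => f (Pi.single i (Matrix.single a b (1 : F)))) hD
  change innerMC (Pi.single i (Matrix.single a b (1 : F))) D = 0 at h
  rw [show innerMC (Pi.single i (Matrix.single a b (1 : F))) D = D i a b from ?_] at h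
  · exact h
  unfold innerMC
  rw [Finset.sum_eq_single i]
  · rw [Pi.single_eq_same]
    rw [Finset.sum_eq_single a, Finset.sum_eq_single b]
    · simp [Matrix.single]
    · intro b' _ hb'; simp [Matrix.single, Ne.symm hb']
    · simp
    · intro a' _ ha'
      apply Finset.sum_eq_zero
      intro b' _
      simp [Matrix.single, Ne.symm ha']
    · simp
  · intro j _ hj
    rw [Pi.single_eq_of_ne hj]
    simp
  · simp

lemma innerDualMap_surjective :
    Function.Surjective (innerDualMap (F := F) (m := m) (n := n)) := by
  rw [← LinearMap.injective_iff_surjective_of_finrank_eq_finrank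
    (Subspace.dual_finrank_eq (K := F) (V := MCSpace F m n)).symm]
  exact innerDualMap_injective

lemma finrank_dualMC (𝒞 : Submodule F (MCSpace F m n)) :
    Module.finrank F (dualMC 𝒞) + Module.finrank F 𝒞 = Module.finrank F (MCSpace F m n) := by
  classical
  set L : MCSpace F m n →ₗ[F] Module.Dual F 𝒞 := 𝒞.dualRestrict.comp innerDualMap with hL
  have hker : LinearMap.ker L = dualMC 𝒞 := by
    ext D
    constructor
    · intro hD C hC
      have := congrArg (fun f => f ⟨C, hC⟩) (LinearMap.mem_ker.1 hD)
      exact this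
    · intro hD
      rw [LinearMap.mem_ker]
      ext ⟨C, hC⟩
      exact hD C hC
  have hsurj : Function.Surjective L :=
    (Subspace.dualRestrict_surjective (W := 𝒞)).comp innerDualMap_surjective
  have h1 := LinearMap.finrank_range_add_finrank_ker L
  rw [LinearMap.range_eq_top.2 hsurj, hker] at h1
  rw [finrank_top, Subspace.dual_finrank_eq] at h1
  omega

lemma le_dualMC_dualMC (𝒞 : Submodule F (MCSpace F m n)) : 𝒞 ≤ dualMC (dualMC 𝒞) := by
  intro C hC D hD
  rw [innerMC_symm]
  exact hD C hC

lemma dualMC_dualMC (𝒞 : Submodule F (MCSpace F m n)) : dualMC (dualMC 𝒞) = 𝒞 := by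
  refine (Submodule.eq_of_le_of_finrank_le (le_dualMC_dualMC 𝒞) ?_).symm
  have h1 := finrank_dualMC 𝒞
  have h2 := finrank_dualMC (dualMC 𝒞)
  omega

end AuxLin


section AuxRank

variable {F : Type*} [Field F] [Fintype F] {ℓ : ℕ} {m n : Fin ℓ → ℕ}
variable (X : (i : Fin ℓ) → Finset (Fin (m i))) (Y : (i : Fin ℓ) → Finset (Fin (n i)))

lemma projMCLin_surjective : Function.Surjective (projMCLin (F := F) X Y) :=
  fun D => ⟨extMC X Y D, proj_extMC X Y D⟩

lemma cardX_le (i : Fin ℓ) : (X i).card ≤ m i := by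
  simpa using Finset.card_le_univ (X i)

lemma cardY_le (i : Fin ℓ) : (Y i).card ≤ n i := by
  simpa using Finset.card_le_univ (Y i)

/-- The arithmetic identity `S + Σ (m-x)(n-y) = Σ mn`. -/
lemma sum_cover_arith :
    (∑ i, (n i * (X i).card + m i * (Y i).card - (X i).card * (Y i).card)) +
      ∑ i, (m i - (X i).card) * (n i - (Y i).card) = ∑ i, m i * n i := by
  rw [← Finset.sum_add_distrib]
  refine Finset.sum_congr rfl fun i _ => ?_
  have hx := cardX_le X i
  have hy := cardY_le Y i
  have hxy : (X i).card * (Y i).card ≤ n i * (X i).card + m i * (Y i).card :=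
    le_trans (Nat.mul_le_mul_right _ hx) (Nat.le_add_left _ _)
  zify [hx, hy, hxy]
  ring

lemma finrank_zeroOnMC :
    Module.finrank F (zeroOnMC (F := F) X Y) = ∑ i, (m i - (X i).card) * (n i - (Y i).card) := by
  have hbij : Function.Bijective
      ((projMCLin (F := F) X Y).comp (zeroOnMC X Y).subtype) := by
    constructor
    · intro ⟨C, hC⟩ ⟨C', hC'⟩ h
      have : extMC X Y (projMC X Y C) = extMC X Y (projMC X Y C') := by
        exact congrArg (extMC X Y) h
      rw [extMC_proj X Y hC, extMC_proj X Y hC'] at this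
      exact Subtype.ext this
    · intro D
      exact ⟨⟨extMC X Y D, extMC_mem_zeroOn X Y D⟩, proj_extMC X Y D⟩
  rw [LinearEquiv.finrank_eq (LinearEquiv.ofBijective _ hbij), finrank_MCSpace]

lemma finrank_ker_projMCLin :
    Module.finrank F (LinearMap.ker (projMCLin (F := F) X Y)) +
      ∑ i, (m i - (X i).card) * (n i - (Y i).card) = ∑ i, m i * n i := by
  have h := LinearMap.finrank_range_add_finrank_ker (projMCLin (F := F) X Y)
  rw [LinearMap.range_eq_top.2 (projMCLin_surjective X Y), finrank_top,
    finrank_MCSpace, finrank_MCSpace] at h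
  omega

lemma finrank_punctureMC (𝒞 : Submodule F (MCSpace F m n)) :
    Module.finrank F 𝒞 -
      ∑ i, (n i * (X i).card + m i * (Y i).card - (X i).card * (Y i).card)
      ≤ Module.finrank F (punctureMC 𝒞 X Y) := by
  classical
  set f := (projMCLin (F := F) X Y).comp 𝒞.subtype with hf
  have hrange : LinearMap.range f = punctureMC 𝒞 X Y := by
    rw [hf, LinearMap.range_comp, Submodule.range_subtype]; rfl
  have h1 := LinearMap.finrank_range_add_finrank_ker f
  rw [hrange] at h1
  -- the kernel of f embeds into the kernel of projMCLin
  have hker : Module.finrank F (LinearMap.ker f) ≤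
      Module.finrank F (LinearMap.ker (projMCLin (F := F) X Y)) := by
    have hg : ∀ x : LinearMap.ker f, (𝒞.subtype x.1 : MCSpace F m n) ∈
        LinearMap.ker (projMCLin (F := F) X Y) := by
      intro ⟨x, hx⟩
      simpa [hf] using hx
    refine LinearMap.finrank_le_finrank_of_injective
      (f := LinearMap.codRestrict _ (𝒞.subtype.comp (LinearMap.ker f).subtype)
        (fun x => hg x)) ?_
    intro x y hxy
    have := congrArg Subtype.val hxy
    exact Subtype.ext (Subtype.ext this)
  have h2 := finrank_ker_projMCLin (F := F) X Y
  have h3 := sum_cover_arith X Y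
  omega

lemma finrank_shortenMC (𝒞 : Submodule F (MCSpace F m n)) :
    Module.finrank F 𝒞 -
      ∑ i, (n i * (X i).card + m i * (Y i).card - (X i).card * (Y i).card)
      ≤ Module.finrank F (shortenMC 𝒞 X Y) := by
  classical
  set f := (projMCLin (F := F) X Y).comp (𝒞 ⊓ zeroOnMC X Y).subtype with hf
  have hrange : LinearMap.range f = shortenMC 𝒞 X Y := by
    rw [hf, LinearMap.range_comp, Submodule.range_subtype]; rfl
  have hker : LinearMap.ker f = ⊥ := by
    rw [LinearMap.ker_eq_bot']
    intro ⟨C, hC⟩ hC0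
    have hC0' : projMC X Y C = 0 := hC0
    have : extMC X Y (projMC X Y C) = C := extMC_proj X Y hC.2
    rw [hC0'] at this
    refine Subtype.ext (show C = 0 from ?_)
    rw [← this]
    funext i a b
    by_cases ha : a ∈ X i <;> by_cases hb : b ∈ Y i <;> simp [extMC, ha, hb]
  have h1 := LinearMap.finrank_range_add_finrank_ker f
  rw [hrange, hker, finrank_bot, add_zero] at h1
  have h2 := Submodule.finrank_sup_add_finrank_inf_eq 𝒞 (zeroOnMC (F := F) X Y)
  have h3 : Module.finrank F ↥(𝒞 ⊔ zeroOnMC X Y) ≤ ∑ i, m i * n i := by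
    rw [← finrank_MCSpace (F := F) (m := m) (n := n)]
    exact Submodule.finrank_le _
  have h4 := finrank_zeroOnMC (F := F) X Y
  have h5 := sum_cover_arith X Y
  have h6 : Module.finrank F 𝒞 ≤ ∑ i, m i * n i := by
    rw [← finrank_MCSpace (F := F) (m := m) (n := n)]
    exact Submodule.finrank_le _
  omega

end AuxRank


section AuxDualDist

variable {F : Type*} [Field F] [Fintype F] {ℓ : ℕ} {m n : Fin ℓ → ℕ}
variable (X : (i : Fin ℓ) → Finset (Fin (m i))) (Y : (i : Fin ℓ) → Finset (Fin (n i)))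

lemma mem_dualMC {𝒞 : Submodule F (MCSpace F m n)} {D : MCSpace F m n} :
    D ∈ dualMC 𝒞 ↔ ∀ C ∈ 𝒞, innerMC C D = 0 := Iff.rfl

lemma mem_punctureMC {𝒞 : Submodule F (MCSpace F m n)} {D'} :
    D' ∈ punctureMC 𝒞 X Y ↔ ∃ C ∈ 𝒞, projMC X Y C = D' := by
  rw [punctureMC, Submodule.mem_map]; rfl

lemma mem_shortenMC {𝒞 : Submodule F (MCSpace F m n)} {D'} :
    D' ∈ shortenMC 𝒞 X Y ↔
      ∃ C, (C ∈ 𝒞 ∧ C ∈ zeroOnMC X Y) ∧ projMC X Y C = D' := by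
  rw [shortenMC, Submodule.mem_map]
  simp only [Submodule.mem_inf]
  rfl

lemma dual_punctureMC (𝒞 : Submodule F (MCSpace F m n)) :
    dualMC (punctureMC 𝒞 X Y) = shortenMC (dualMC 𝒞) X Y := by
  ext D'
  rw [mem_dualMC, mem_shortenMC]
  constructor
  · intro hD'
    refine ⟨extMC X Y D', ⟨?_, extMC_mem_zeroOn X Y D'⟩, proj_extMC X Y D'⟩
    intro C hC
    have hz : ∀ i a b, a ∈ X i ∨ b ∈ Y i → C i a b * extMC X Y D' i a b = 0 :=
      fun i a b hab => by rw [extMC_mem_zeroOn X Y D' i a b hab, mul_zero]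
    have h := innerMC_proj X Y C (extMC X Y D') hz
    rw [proj_extMC] at h
    rw [← h]
    exact hD' (projMC X Y C) ((mem_punctureMC X Y).2 ⟨C, hC, rfl⟩)
  · rintro ⟨D, ⟨hD, hDz⟩, rfl⟩ C' hC'
    obtain ⟨C, hC, rfl⟩ := (mem_punctureMC X Y).1 hC'
    have hz : ∀ i a b, a ∈ X i ∨ b ∈ Y i → C i a b * D i a b = 0 :=
      fun i a b hab => by rw [hDz i a b hab, mul_zero]
    rw [innerMC_proj X Y C D hz]
    exact hD C hC

lemma dual_shortenMC (𝒞 : Submodule F (MCSpace F m n)) :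
    dualMC (shortenMC 𝒞 X Y) = punctureMC (dualMC 𝒞) X Y := by
  have h1 := dual_punctureMC X Y (dualMC 𝒞)
  rw [dualMC_dualMC] at h1
  calc dualMC (shortenMC 𝒞 X Y)
      = dualMC (dualMC (punctureMC (dualMC 𝒞) X Y)) := by rw [h1]
    _ = punctureMC (dualMC 𝒞) X Y := dualMC_dualMC _

lemma wtMC_exists (C : MCSpace F m n) :
    ∃ X' Y', IsMultiCover X' Y' C ∧ mcSize X' Y' = wtMC C := by
  have hne : {r | ∃ X' Y', IsMultiCover X' Y' C ∧ mcSize X' Y' = r}.Nonempty :=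
    ⟨mcSize (fun i => Finset.univ) (fun _ => ∅), fun _ => Finset.univ, fun _ => ∅,
      fun i a b _ => Or.inl (Finset.mem_univ a), rfl⟩
  exact Nat.sInf_mem hne

lemma wtMC_le (C : MCSpace F m n) {X' Y'} (h : IsMultiCover X' Y' C) :
    wtMC C ≤ mcSize X' Y' :=
  Nat.sInf_le ⟨X', Y', h, rfl⟩

lemma wtMC_le_proj_add (C : MCSpace F m n) :
    wtMC C ≤ wtMC (projMC X Y C) + mcSize X Y := by
  obtain ⟨X', Y', hcov, hsize⟩ := wtMC_exists (projMC X Y C)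
  have hc : IsMultiCover (fun i => X i ∪ (X' i).image (eX X i))
      (fun i => Y i ∪ (Y' i).image (eY Y i)) C := by
    intro i a b hne
    by_cases ha : a ∈ X i
    · exact Or.inl (Finset.mem_union_left _ ha)
    by_cases hb : b ∈ Y i
    · exact Or.inr (Finset.mem_union_left _ hb)
    obtain ⟨a', rfl⟩ := eX_surj X i a ha
    obtain ⟨b', rfl⟩ := eY_surj Y i b hb
    rcases hcov i a' b' (by rw [projMC_apply]; exact hne) with h | h
    · exact Or.inl (Finset.mem_union_right _ (Finset.mem_image_of_mem _ h))
    · exact Or.inr (Finset.mem_union_right _ (Finset.mem_image_of_mem _ h))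
  refine le_trans (wtMC_le C hc) ?_
  rw [← hsize]
  unfold mcSize
  rw [add_comm, ← Finset.sum_add_distrib]
  refine Finset.sum_le_sum fun i _ => ?_
  beta_reduce
  have h1 := Finset.card_union_le (X i) ((X' i).image (eX X i))
  have h1' := Finset.card_image_le (s := X' i) (f := eX X i)
  have h2 := Finset.card_union_le (Y i) ((Y' i).image (eY Y i))
  have h2' := Finset.card_image_le (s := Y' i) (f := eY Y i)
  omega

lemma wtMC_le_proj_of_zeroOn {C : MCSpace F m n} (hC : C ∈ zeroOnMC X Y) :
    wtMC C ≤ wtMC (projMC X Y C) := by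
  obtain ⟨X', Y', hcov, hsize⟩ := wtMC_exists (projMC X Y C)
  have hc : IsMultiCover (fun i => (X' i).image (eX X i))
      (fun i => (Y' i).image (eY Y i)) C := by
    intro i a b hne
    have ha : a ∉ X i := fun h => hne (hC i a b (Or.inl h))
    have hb : b ∉ Y i := fun h => hne (hC i a b (Or.inr h))
    obtain ⟨a', rfl⟩ := eX_surj X i a ha
    obtain ⟨b', rfl⟩ := eY_surj Y i b hb
    rcases hcov i a' b' (by rw [projMC_apply]; exact hne) with h | h
    · exact Or.inl (Finset.mem_image_of_mem _ h)
    · exact Or.inr (Finset.mem_image_of_mem _ h)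
  refine le_trans (wtMC_le C hc) (le_of_eq ?_)
  rw [← hsize]
  unfold mcSize
  refine Finset.sum_congr rfl fun i _ => ?_
  rw [Finset.card_image_of_injective _ (eX_injective X i),
    Finset.card_image_of_injective _ (eY_injective Y i)]

end AuxDualDist

/-- basic properties of punctured and shortened codes: duality, dimension
bounds, and minimum-distance bounds. -/
theorem puncture_shorten_properties {F : Type*} [Field F] [Fintype F] {ℓ : ℕ}
    {m n : Fin ℓ → ℕ}
    (𝒞 : Submodule F (MCSpace F m n))
    (X : (i : Fin ℓ) → Finset (Fin (m i))) (Y : (i : Fin ℓ) → Finset (Fin (n i))) :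
    dualMC (punctureMC 𝒞 X Y) = shortenMC (dualMC 𝒞) X Y ∧
    dualMC (shortenMC 𝒞 X Y) = punctureMC (dualMC 𝒞) X Y ∧
    Module.finrank F 𝒞 - ∑ i, (n i * (X i).card + m i * (Y i).card - (X i).card * (Y i).card)
      ≤ Module.finrank F (punctureMC 𝒞 X Y) ∧
    Module.finrank F 𝒞 - ∑ i, (n i * (X i).card + m i * (Y i).card - (X i).card * (Y i).card)
      ≤ Module.finrank F (shortenMC 𝒞 X Y) ∧
    (1 < (punctureMC 𝒞 X Y :
          Set (MCSpace F (fun i => m i - (X i).card) (fun i => n i - (Y i).card))).ncard →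
      mcSize X Y < dMC (𝒞 : Set (MCSpace F m n)) →
      dMC (𝒞 : Set (MCSpace F m n)) - mcSize X Y
        ≤ dMC (punctureMC 𝒞 X Y :
            Set (MCSpace F (fun i => m i - (X i).card) (fun i => n i - (Y i).card)))) ∧
    (1 < (shortenMC 𝒞 X Y :
          Set (MCSpace F (fun i => m i - (X i).card) (fun i => n i - (Y i).card))).ncard →
      dMC (𝒞 : Set (MCSpace F m n))
        ≤ dMC (shortenMC 𝒞 X Y :
            Set (MCSpace F (fun i => m i - (X i).card) (fun i => n i - (Y i).card)))) := by
  refine ⟨dual_punctureMC X Y 𝒞, dual_shortenMC X Y 𝒞, finrank_punctureMC X Y 𝒞,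
    finrank_shortenMC X Y 𝒞, ?_, ?_⟩
  · intro hcard hlt
    obtain ⟨A, B, hA, hB, hAB⟩ := (Set.one_lt_ncard_iff (Set.toFinite _)).1 hcard
    refine le_csInf ⟨wtMC (A - B), A, hA, B, hB, hAB, rfl⟩ ?_
    rintro r ⟨C', hC', D', hD', hne, rfl⟩
    obtain ⟨C, hC, rfl⟩ := (mem_punctureMC X Y).1 hC'
    obtain ⟨D, hD, rfl⟩ := (mem_punctureMC X Y).1 hD'
    have hCD : C ≠ D := fun h => hne (by rw [h])
    have h1 : dMC (𝒞 : Set (MCSpace F m n)) ≤ wtMC (C - D) :=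
      Nat.sInf_le ⟨C, hC, D, hD, hCD, rfl⟩
    have h2 := wtMC_le_proj_add X Y (C - D)
    have h3 : projMC X Y (C - D) = projMC X Y C - projMC X Y D :=
      map_sub (projMCLin X Y) C D
    rw [h3] at h2
    omega
  · intro hcard
    obtain ⟨A, B, hA, hB, hAB⟩ := (Set.one_lt_ncard_iff (Set.toFinite _)).1 hcard
    refine le_csInf ⟨wtMC (A - B), A, hA, B, hB, hAB, rfl⟩ ?_
    rintro r ⟨C', hC', D', hD', hne, rfl⟩
    obtain ⟨C, ⟨hC, hCz⟩, rfl⟩ := (mem_shortenMC X Y).1 hC'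
    obtain ⟨D, ⟨hD, hDz⟩, rfl⟩ := (mem_shortenMC X Y).1 hD'
    have hCD : C ≠ D := fun h => hne (by rw [h])
    have h1 : dMC (𝒞 : Set (MCSpace F m n)) ≤ wtMC (C - D) :=
      Nat.sInf_le ⟨C, hC, D, hD, hCD, rfl⟩
    have hsub : C - D ∈ zeroOnMC X Y := by
      intro i a b hab
      show C i a b - D i a b = 0
      rw [hCz i a b hab, hDz i a b hab, sub_zero]
    have h2 := wtMC_le_proj_of_zeroOn X Y hsub
    have h3 : projMC X Y (C - D) = projMC X Y C - projMC X Y D :=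
      map_sub (projMCLin X Y) C D
    rw [h3] at h2
    omega
end
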